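/- arXiv:1109.0832 — 2 statements merged into one kernel-verified Lean document; each statement's English description precedes it below -/
import Mathlib

section
/- Let n, m, l ∈ ℕ with n > 1, 0 < l < n, and λ = n/(mn+l). Let ν be an environment on ℤ taking values in {1/2, 1} such that the gaps between consecutive sites x with ν(x) = 1 are all of length m or m+1, and such that the density of sites with ν(x) = 1 in [0,N) converges to λ as N → ∞. Then for the random walk (X_n) in ν started at 0, almost surely lim_{n→∞} X_n/n exists and equals 1/(2m + 1 − m(m+1)λ). -/
open MeasureTheory Filter Finset Matrix
open scoped ENNReal
noncomputable section

/-- One-step transition probabilities of the nearest-neighbor random walk on `ℤ`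
in the environment `ω`: from `z` the walk moves to `z+1` with probability `ω z`
and to `z-1` with probability `1 - ω z`. -/
def envStep (ω : ℤ → ℝ) (z y : ℤ) : ℝ :=
  if y = z + 1 then ω z else if y = z - 1 then 1 - ω z else 0

/-- `IsWalkLaw step x P` : `P` is the law of the Markov chain on `ℤ` started at `x`
with one-step transition probabilities `step`, viewed as a measure on trajectories. -/
def IsWalkLaw (step : ℤ → ℤ → ℝ) (x : ℤ) (P : Measure (ℕ → ℤ)) : Prop :=
  IsProbabilityMeasure P ∧
    ∀ (n : ℕ) (path : ℕ → ℤ),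
      P {f | ∀ i ≤ n, f i = path i} =
        (if path 0 = x then (1 : ℝ≥0∞) else 0) *
          ∏ i ∈ Finset.range n, ENNReal.ofReal (step (path i) (path (i + 1)))

/-- A `(p,λ)` environment : each site is a `(1/2,1/2)` or a `(p,1-p)` site and the
upper density of `(p,1-p)` sites on the nonnegative integers equals `λ`. -/
def IsPLEnv (p lam : ℝ) (ω : ℤ → ℝ) : Prop :=
  (∀ x : ℤ, ω x = 1 / 2 ∨ ω x = p) ∧
    Filter.limsup
      (fun n : ℕ => (∑ x ∈ Finset.range (n + 1), if ω (x : ℤ) = p then (1 : ℝ) else 0) / (n + 1))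
      Filter.atTop = lam

/-- First hitting time of `z` by the trajectory `f` (`⊤` if `z` is never visited). -/
def hitTime (f : ℕ → ℤ) (z : ℤ) : ℕ∞ :=
  ⨅ (m : ℕ) (_ : f m = z), (m : ℕ∞)

/-- An `Υ` environment: values in `{1/2, 1}`, drift sites unbounded below, the gap
between consecutive drift sites is always `m` or `m+1`, and the density of drift
sites in `[0,N)` converges to `λ`. -/
def IsUpsilonEnv (m : ℕ) (lam : ℝ) (ν : ℤ → ℝ) : Prop :=
  (∀ x : ℤ, ν x = 1 / 2 ∨ ν x = 1) ∧
    (∀ x : ℤ, ∃ y : ℤ, y ≤ x ∧ ν y = 1) ∧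
    (∀ x : ℤ, ν x = 1 →
      ∃ y : ℤ, x < y ∧ ν y = 1 ∧ (y - x = (m : ℤ) ∨ y - x = (m : ℤ) + 1) ∧
        ∀ z : ℤ, x < z → z < y → ν z ≠ 1) ∧
    Filter.Tendsto
      (fun N : ℕ => (∑ x ∈ Finset.range N, if ν (x : ℤ) = 1 then (1 : ℝ) else 0) / N)
      Filter.atTop (nhds lam)

/-! ### Auxiliary development for the proof -/

namespace RWREspeed

/-- Bundled structural hypotheses on the environment (with `1 ≤ m`). -/
structure GoodEnv (m : ℕ) (ν : ℤ → ℝ) : Prop where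
  half : ∀ x : ℤ, ν x = 1 / 2 ∨ ν x = 1
  below : ∀ x : ℤ, ∃ y : ℤ, y ≤ x ∧ ν y = 1
  gap : ∀ x : ℤ, ν x = 1 →
      ∃ y : ℤ, x < y ∧ ν y = 1 ∧ (y - x = (m : ℤ) ∨ y - x = (m : ℤ) + 1) ∧
        ∀ z : ℤ, x < z → z < y → ν z ≠ 1
  hm : 1 ≤ m

section Env

variable {m : ℕ} {ν : ℤ → ℝ}

lemma GoodEnv.nonneg (E : GoodEnv m ν) (x : ℤ) : 0 ≤ ν x := by
  rcases E.half x with h | h <;> rw [h] <;> norm_num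

lemma GoodEnv.le_one (E : GoodEnv m ν) (x : ℤ) : ν x ≤ 1 := by
  rcases E.half x with h | h <;> rw [h] <;> norm_num

/-- The largest drift site `≤ z`. -/
def prevD (ν : ℤ → ℝ) (z : ℤ) : ℤ :=
  Classical.epsilon (fun d => (d ≤ z ∧ ν d = 1) ∧ ∀ y : ℤ, y ≤ z ∧ ν y = 1 → y ≤ d)

lemma prevD_spec (E : GoodEnv m ν) (z : ℤ) :
    (prevD ν z ≤ z ∧ ν (prevD ν z) = 1) ∧ ∀ y : ℤ, y ≤ z ∧ ν y = 1 → y ≤ prevD ν z := by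
  have h : ∃ d : ℤ, (d ≤ z ∧ ν d = 1) ∧ ∀ y : ℤ, y ≤ z ∧ ν y = 1 → y ≤ d := by
    obtain ⟨d, hd1, hd2⟩ := Int.exists_greatest_of_bdd
      (P := fun y => y ≤ z ∧ ν y = 1) ⟨z, fun y hy => hy.1⟩
      (by obtain ⟨y, hy, hy1⟩ := E.below z; exact ⟨y, hy, hy1⟩)
    exact ⟨d, hd1, hd2⟩
  exact Classical.epsilon_spec h

/-- Distance to the previous drift site. -/
def rhoZ (ν : ℤ → ℝ) (z : ℤ) : ℤ := z - prevD ν z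

lemma rhoZ_nonneg (E : GoodEnv m ν) (z : ℤ) : 0 ≤ rhoZ ν z := by
  have := (prevD_spec E z).1.1; unfold rhoZ; omega

lemma rhoZ_eq_zero_iff (E : GoodEnv m ν) (z : ℤ) : rhoZ ν z = 0 ↔ ν z = 1 := by
  constructor
  · intro h
    have h2 := (prevD_spec E z).1.2
    have : prevD ν z = z := by unfold rhoZ at h; omega
    rwa [this] at h2
  · intro h
    have := (prevD_spec E z).2 z ⟨le_refl z, h⟩
    have := (prevD_spec E z).1.1
    unfold rhoZ; omega

lemma rhoZ_le (E : GoodEnv m ν) (z : ℤ) : rhoZ ν z ≤ (m : ℤ) := by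
  obtain ⟨⟨hle, hdrift⟩, hmax⟩ := prevD_spec E z
  obtain ⟨y, hxy, hy1, hgap, hbetween⟩ := E.gap _ hdrift
  have hyz : ¬ (y ≤ z) := fun h => absurd (hmax y ⟨h, hy1⟩) (by omega)
  unfold rhoZ; omega

lemma rhoZ_succ_of_not_drift (E : GoodEnv m ν) (z : ℤ) (h : ν (z + 1) ≠ 1) :
    rhoZ ν (z + 1) = rhoZ ν z + 1 := by
  obtain ⟨⟨hle, hdrift⟩, hmax⟩ := prevD_spec E (z+1)
  obtain ⟨⟨hle', hdrift'⟩, hmax'⟩ := prevD_spec E z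
  have h1 : prevD ν (z+1) ≤ z := by
    rcases eq_or_lt_of_le hle with heq | hlt
    · exact absurd (heq ▸ hdrift) h
    · omega
  have h2 : prevD ν (z+1) ≤ prevD ν z := hmax' _ ⟨h1, hdrift⟩
  have h3 : prevD ν z ≤ prevD ν (z+1) := hmax _ ⟨by omega, hdrift'⟩
  unfold rhoZ; omega

lemma rhoZ_of_succ_drift (E : GoodEnv m ν) (z : ℤ) (h : ν (z + 1) = 1) :
    rhoZ ν z = (m : ℤ) - 1 ∨ rhoZ ν z = (m : ℤ) := by
  obtain ⟨⟨hle, hdrift⟩, hmax⟩ := prevD_spec E z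
  obtain ⟨y, hxy, hy1, hgap, hbetween⟩ := E.gap _ hdrift
  have hyz : ¬ (y ≤ z) := fun hc => absurd (hmax y ⟨hc, hy1⟩) (by omega)
  -- y is the next drift site after prevD z; z+1 is a drift site > prevD z, so y ≤ z+1.
  have hy : y = z + 1 := by
    by_contra hne
    have h1 : z + 1 < y := by omega
    exact hbetween (z+1) (by omega) h1 h
  unfold rhoZ; omega

/-- Increment weight `2 ρ(z) + 1`. -/
def WZ (ν : ℤ → ℝ) (z : ℤ) : ℝ := 2 * (rhoZ ν z : ℝ) + 1

lemma WZ_ge_one (E : GoodEnv m ν) (z : ℤ) : 1 ≤ WZ ν z := by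
  have := rhoZ_nonneg E z
  have : (0:ℝ) ≤ (rhoZ ν z : ℝ) := by exact_mod_cast this
  unfold WZ; linarith

/-- The harmonic coordinate `g`. -/
def gZ (ν : ℤ → ℝ) (z : ℤ) : ℝ :=
  (∑ x ∈ Finset.Ico (0:ℤ) z, WZ ν x) - ∑ x ∈ Finset.Ico z (0:ℤ), WZ ν x

lemma gZ_zero : gZ ν 0 = 0 := by simp [gZ]

lemma gZ_succ (z : ℤ) : gZ ν (z + 1) = gZ ν z + WZ ν z := by
  rcases le_or_gt 0 z with h | h
  · have h1 : Finset.Ico (0:ℤ) (z+1) = insert z (Finset.Ico (0:ℤ) z) := by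
      ext x; simp only [Finset.mem_Ico, Finset.mem_insert]; omega
    have h2 : Finset.Ico (z+1) (0:ℤ) = ∅ := Finset.Ico_eq_empty (by omega)
    have h3 : Finset.Ico z (0:ℤ) = ∅ := Finset.Ico_eq_empty (by omega)
    rw [gZ, gZ, h1, h2, h3, Finset.sum_insert (by simp), Finset.sum_empty]
    ring
  · have h1 : Finset.Ico (0:ℤ) (z+1) = ∅ := Finset.Ico_eq_empty (by omega)
    have h2 : Finset.Ico (0:ℤ) z = ∅ := Finset.Ico_eq_empty (by omega)
    have h3 : Finset.Ico z (0:ℤ) = insert z (Finset.Ico (z+1) (0:ℤ)) := by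
      ext x; simp only [Finset.mem_Ico, Finset.mem_insert]; omega
    rw [gZ, gZ, h1, h2, h3, Finset.sum_insert (by simp), Finset.sum_empty]
    ring

lemma gZ_mono (E : GoodEnv m ν) : Monotone (gZ ν) := by
  apply monotone_int_of_le_succ
  intro z
  rw [gZ_succ]
  have := WZ_ge_one E z
  linarith

lemma gZ_pred (z : ℤ) : gZ ν (z - 1) = gZ ν z - WZ ν (z - 1) := by
  have := gZ_succ (ν := ν) (z - 1)
  simp only [sub_add_cancel] at this
  linarith

end Env

/-! ### Path combinatorics -/

/-- Direction of a step. -/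
def dirB : Bool → ℤ
  | true => 1
  | false => -1

/-- Position after `i` steps with signs `σ`. -/
def posP (σ : ℕ → Bool) : ℕ → ℤ
  | 0 => 0
  | i + 1 => posP σ i + dirB (σ i)

/-- Extension of a finite sign vector. -/
def extB (T : ℕ) (σ : Fin T → Bool) : ℕ → Bool :=
  fun j => if h : j < T then σ ⟨j, h⟩ else true

/-- Weight of the length-`T` path with signs `σ`. -/
def wtP (ν : ℤ → ℝ) (σ : ℕ → Bool) (T : ℕ) : ℝ :=
  ∏ i ∈ Finset.range T, envStep ν (posP σ i) (posP σ (i + 1))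

/-- Endpoint distribution at time `T`. -/
def QQ (ν : ℤ → ℝ) (T : ℕ) (z : ℤ) : ℝ :=
  ∑ σ : Fin T → Bool, if posP (extB T σ) T = z then wtP ν (extB T σ) T else 0

section PathLemmas

variable {m : ℕ} {ν : ℤ → ℝ}

lemma posP_congr {σ σ' : ℕ → Bool} {i : ℕ} (h : ∀ j < i, σ j = σ' j) :
    posP σ i = posP σ' i := by
  induction i with
  | zero => rfl
  | succ i ih =>
    rw [posP, posP, ih (fun j hj => h j (by omega)), h i (by omega)]

lemma posP_abs_le (σ : ℕ → Bool) (i : ℕ) : |posP σ i| ≤ (i : ℤ) := by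
  induction i with
  | zero => simp [posP]
  | succ i ih =>
    rw [abs_le] at ih ⊢
    rw [posP]
    cases σ i <;> simp only [dirB] <;> push_cast <;> omega

lemma envStep_nonneg (E : GoodEnv m ν) (z y : ℤ) : 0 ≤ envStep ν z y := by
  unfold envStep
  split_ifs
  · exact E.nonneg z
  · have := E.le_one z; linarith
  · norm_num

lemma wtP_nonneg (E : GoodEnv m ν) (σ : ℕ → Bool) (T : ℕ) : 0 ≤ wtP ν σ T := by
  exact Finset.prod_nonneg fun i _ => envStep_nonneg E _ _

lemma QQ_nonneg (E : GoodEnv m ν) (T : ℕ) (z : ℤ) : 0 ≤ QQ ν T z := by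
  apply Finset.sum_nonneg
  intro σ _
  split_ifs
  · exact wtP_nonneg E _ _
  · norm_num

lemma QQ_eq_zero (T : ℕ) (z : ℤ) (h : (T : ℤ) < |z|) : QQ ν T z = 0 := by
  apply Finset.sum_eq_zero
  intro σ _
  rw [if_neg]
  intro hc
  have := posP_abs_le (extB T σ) T
  rw [hc] at this
  omega

/-- Appending a step to a sign vector. -/
def snb {T : ℕ} (σ : Fin T → Bool) (b : Bool) : Fin (T + 1) → Bool :=
  fun i => if h : (i : ℕ) < T then σ ⟨i, h⟩ else b

def snbEquiv (T : ℕ) : (Fin T → Bool) × Bool ≃ (Fin (T + 1) → Bool) where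
  toFun p := snb p.1 p.2
  invFun τ := (fun i => τ ⟨i, by omega⟩, τ ⟨T, by omega⟩)
  left_inv p := by
    ext i
    · simp only [snb]
      rw [dif_pos i.isLt]
    · simp only [snb]
      rw [dif_neg (by omega)]
  right_inv τ := by
    funext i
    simp only [snb]
    split_ifs with h
    · rfl
    · congr 1
      ext
      simp
      omega

lemma extB_snb_lt {T : ℕ} (σ : Fin T → Bool) (b : Bool) {j : ℕ} (hj : j < T) :
    extB (T + 1) (snb σ b) j = extB T σ j := by
  simp only [extB, snb]
  rw [dif_pos (by omega), dif_pos hj, dif_pos hj]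

lemma extB_snb_last {T : ℕ} (σ : Fin T → Bool) (b : Bool) :
    extB (T + 1) (snb σ b) T = b := by
  simp only [extB, snb]
  rw [dif_pos (by omega), dif_neg (by omega)]

lemma posP_extB_snb {T : ℕ} (σ : Fin T → Bool) (b : Bool) {i : ℕ} (hi : i ≤ T) :
    posP (extB (T + 1) (snb σ b)) i = posP (extB T σ) i :=
  posP_congr fun j hj => extB_snb_lt σ b (by omega)

lemma wtP_snb {T : ℕ} (σ : Fin T → Bool) (b : Bool) :
    wtP ν (extB (T + 1) (snb σ b)) (T + 1) =
      wtP ν (extB T σ) T * envStep ν (posP (extB T σ) T) (posP (extB T σ) T + dirB b) := by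
  unfold wtP
  rw [Finset.prod_range_succ]
  congr 1
  · refine Finset.prod_congr rfl fun i hi => ?_
    rw [Finset.mem_range] at hi
    rw [posP_extB_snb σ b (le_of_lt hi), posP_extB_snb σ b (by omega : i + 1 ≤ T)]
  · have h1 : posP (extB (T+1) (snb σ b)) (T+1) =
        posP (extB (T+1) (snb σ b)) T + dirB (extB (T+1) (snb σ b) T) := rfl
    rw [h1, posP_extB_snb σ b le_rfl, extB_snb_last]

lemma envStep_add_dir (z : ℤ) (b : Bool) :
    envStep ν z (z + dirB b) = if b then ν z else 1 - ν z := by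
  cases b
  · show (if z + -1 = z + 1 then ν z else if z + -1 = z - 1 then 1 - ν z else 0) = _
    rw [if_neg (by omega), if_pos (by omega)]; simp
  · show (if z + 1 = z + 1 then ν z else if z + 1 = z - 1 then 1 - ν z else 0) = _
    rw [if_pos rfl]; simp

lemma QQ_zero (z : ℤ) : QQ ν 0 z = if z = 0 then 1 else 0 := by
  unfold QQ
  have h : ∀ σ : Fin 0 → Bool,
      (if posP (extB 0 σ) 0 = z then wtP ν (extB 0 σ) 0 else 0) = if z = 0 then 1 else 0 := by
    intro σ
    simp [posP, wtP, eq_comm]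
  rw [Finset.sum_congr rfl fun σ _ => h σ, Finset.sum_const]
  have : (Finset.univ : Finset (Fin 0 → Bool)).card = 1 := by
    simp
  rw [this, one_smul]

lemma QQ_succ (T : ℕ) (z : ℤ) :
    QQ ν (T + 1) z = QQ ν T (z - 1) * ν (z - 1) + QQ ν T (z + 1) * (1 - ν (z + 1)) := by
  have key : QQ ν (T+1) z =
      ∑ σ : Fin T → Bool, ∑ b : Bool,
        (if posP (extB T σ) T + dirB b = z then
          wtP ν (extB T σ) T * envStep ν (posP (extB T σ) T) (posP (extB T σ) T + dirB b)
          else 0) := by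
    unfold QQ
    rw [← Equiv.sum_comp (snbEquiv T), Fintype.sum_prod_type]
    refine Finset.sum_congr rfl fun σ _ => Finset.sum_congr rfl fun b _ => ?_
    have hpos : posP (extB (T+1) (snbEquiv T (σ, b))) (T+1) = posP (extB T σ) T + dirB b := by
      have h1 : posP (extB (T+1) (snb σ b)) (T+1) =
          posP (extB (T+1) (snb σ b)) T + dirB (extB (T+1) (snb σ b) T) := rfl
      show posP (extB (T+1) (snb σ b)) (T+1) = _
      rw [h1, posP_extB_snb σ b le_rfl, extB_snb_last]
    rw [hpos]
    by_cases h : posP (extB T σ) T + dirB b = z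
    · rw [if_pos h, if_pos h]
      exact wtP_snb σ b
    · rw [if_neg h, if_neg h]
  rw [key]
  have hsum : ∀ σ : Fin T → Bool,
      (∑ b : Bool, (if posP (extB T σ) T + dirB b = z then
          wtP ν (extB T σ) T * envStep ν (posP (extB T σ) T) (posP (extB T σ) T + dirB b)
          else 0)) =
        (if posP (extB T σ) T = z - 1 then wtP ν (extB T σ) T else 0) * ν (z - 1) +
        (if posP (extB T σ) T = z + 1 then wtP ν (extB T σ) T else 0) * (1 - ν (z + 1)) := by
    intro σ
    rw [Fintype.sum_bool]
    rw [show dirB true = 1 from rfl, show dirB false = -1 from rfl]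
    congr 1
    · by_cases h : posP (extB T σ) T = z - 1
      · rw [if_pos (by omega), if_pos h, h]
        have : envStep ν (z-1) (z-1+1) = ν (z-1) := by
          unfold envStep; rw [if_pos rfl]
        rw [this]
      · rw [if_neg (by omega), if_neg h, zero_mul]
    · by_cases h : posP (extB T σ) T = z + 1
      · rw [if_pos (by omega), if_pos h, h]
        have h2 : envStep ν (z+1) (z+1+(-1)) = 1 - ν (z+1) := by
          unfold envStep
          rw [if_neg (by omega), if_pos (by omega)]
        rw [h2]
      · rw [if_neg (by omega), if_neg h, zero_mul]
  rw [Finset.sum_congr rfl fun σ _ => hsum σ, Finset.sum_add_distrib, ← Finset.sum_mul,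
    ← Finset.sum_mul]
  rfl

/-- The interval `[-T, T]`. -/
def II (T : ℕ) : Finset ℤ := Finset.Icc (-(T : ℤ)) (T : ℤ)

lemma sum_shift (a b c : ℤ) (f : ℤ → ℝ) :
    ∑ z ∈ Finset.Icc (a + c) (b + c), f z = ∑ y ∈ Finset.Icc a b, f (y + c) := by
  rw [← map_add_right_Icc a b c, Finset.sum_map]
  rfl

lemma QQ_transfer (T : ℕ) (F : ℤ → ℝ) :
    ∑ z ∈ II (T + 1), QQ ν (T + 1) z * F z =
      ∑ y ∈ II T, QQ ν T y * (ν y * F (y + 1) + (1 - ν y) * F (y - 1)) := by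
  have hrec : ∀ z ∈ II (T + 1), QQ ν (T+1) z * F z =
      QQ ν T (z-1) * ν (z-1) * F z + QQ ν T (z+1) * (1 - ν (z+1)) * F z := by
    intro z _; rw [QQ_succ]; ring
  rw [Finset.sum_congr rfl hrec, Finset.sum_add_distrib]
  have h1 : ∑ z ∈ II (T + 1), QQ ν T (z-1) * ν (z-1) * F z =
      ∑ y ∈ II T, QQ ν T y * ν y * F (y + 1) := by
    have e : II (T + 1) = Finset.Icc ((-(T:ℤ) - 2) + 1) ((T:ℤ) + 1) := by
      unfold II; congr 1 <;> push_cast <;> ring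
    rw [e, sum_shift (-(T:ℤ) - 2) ((T:ℤ)) 1 (fun z => QQ ν T (z-1) * ν (z-1) * F z)]
    simp only [add_sub_cancel_right]
    refine (Finset.sum_subset ?_ ?_).symm
    · intro y hy
      simp only [II, Finset.mem_Icc] at hy ⊢
      omega
    · intro y hy hy2
      simp only [II, Finset.mem_Icc] at hy hy2
      have : QQ ν T y = 0 := QQ_eq_zero T y (by rw [lt_abs]; omega)
      rw [this, zero_mul, zero_mul]
  have h2 : ∑ z ∈ II (T + 1), QQ ν T (z+1) * (1 - ν (z+1)) * F z =
      ∑ y ∈ II T, QQ ν T y * (1 - ν y) * F (y - 1) := by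
    have e : II (T + 1) = Finset.Icc ((-(T:ℤ)) + (-1)) (((T:ℤ) + 2) + (-1)) := by
      unfold II; congr 1 <;> push_cast <;> ring
    rw [e, sum_shift (-(T:ℤ)) ((T:ℤ) + 2) (-1) (fun z => QQ ν T (z+1) * (1 - ν (z+1)) * F z)]
    have hyy : ∀ y : ℤ, y + -1 + 1 = y := by intro y; ring
    simp only [hyy]
    refine (Finset.sum_subset ?_ ?_).symm
    · intro y hy
      simp only [II, Finset.mem_Icc] at hy ⊢
      omega
    · intro y hy hy2
      simp only [II, Finset.mem_Icc] at hy hy2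
      have : QQ ν T y = 0 := QQ_eq_zero T y (by rw [lt_abs]; omega)
      rw [this, zero_mul, zero_mul]
  rw [h1, h2]
  rw [← Finset.sum_add_distrib]
  refine Finset.sum_congr rfl fun y _ => ?_
  ring

lemma sum_wt_F (T : ℕ) (F : ℤ → ℝ) :
    ∑ σ : Fin T → Bool, wtP ν (extB T σ) T * F (posP (extB T σ) T) =
      ∑ z ∈ II T, QQ ν T z * F z := by
  unfold QQ
  have step1 : ∀ z ∈ II T,
      (∑ σ : Fin T → Bool, if posP (extB T σ) T = z then wtP ν (extB T σ) T else 0) * F z =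
      ∑ σ : Fin T → Bool,
        (if posP (extB T σ) T = z then wtP ν (extB T σ) T * F (posP (extB T σ) T) else 0) := by
    intro z _
    rw [Finset.sum_mul]
    refine Finset.sum_congr rfl fun σ _ => ?_
    by_cases h : posP (extB T σ) T = z
    · rw [if_pos h, if_pos h, h]
    · rw [if_neg h, if_neg h, zero_mul]
  rw [Finset.sum_congr rfl step1, Finset.sum_comm]
  refine Finset.sum_congr rfl fun σ _ => ?_
  have hmem : posP (extB T σ) T ∈ II T := by
    have := posP_abs_le (extB T σ) T
    rw [abs_le] at this
    simp only [II, Finset.mem_Icc]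
    omega
  rw [Finset.sum_ite_eq (II T) (posP (extB T σ) T)
    (fun _ => wtP ν (extB T σ) T * F (posP (extB T σ) T)), if_pos hmem]

end PathLemmas

/-! ### Moment bounds -/

section Moments

variable {m : ℕ} {ν : ℤ → ℝ}

/-- `j`-th centered moment sum at time `T`. -/
def SJ (ν : ℤ → ℝ) (j T : ℕ) : ℝ :=
  ∑ z ∈ II T, QQ ν T z * (gZ ν z - (T : ℝ)) ^ j

lemma drift_expand (E : GoodEnv m ν) (y : ℤ) (h : ν y = 1) :
    gZ ν (y + 1) = gZ ν y + 1 := by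
  have hW : WZ ν y = 1 := by
    unfold WZ
    rw [(rhoZ_eq_zero_iff E y).mpr h]
    norm_num
  rw [gZ_succ, hW]

lemma half_expand (E : GoodEnv m ν) (y : ℤ) (h : ν y = 1/2) :
    gZ ν (y + 1) = gZ ν y + (2 * (rhoZ ν y : ℝ) + 1) ∧
      gZ ν (y - 1) = gZ ν y - (2 * (rhoZ ν y : ℝ) - 1) := by
  constructor
  · rw [gZ_succ]; rfl
  · have hnd : ν ((y - 1) + 1) ≠ 1 := by
      simp only [sub_add_cancel]
      rw [h]; norm_num
    have hr : rhoZ ν ((y-1) + 1) = rhoZ ν (y-1) + 1 := rhoZ_succ_of_not_drift E (y-1) hnd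
    simp only [sub_add_cancel] at hr
    have hW : WZ ν (y - 1) = 2 * (rhoZ ν y : ℝ) - 1 := by
      unfold WZ
      rw [show rhoZ ν (y-1) = rhoZ ν y - 1 by omega]
      push_cast
      ring
    rw [gZ_pred, hW]

lemma rho_bounds (E : GoodEnv m ν) (y : ℤ) :
    (0:ℝ) ≤ (rhoZ ν y : ℝ) ∧ (rhoZ ν y : ℝ) ≤ (m : ℝ) := by
  constructor
  · exact_mod_cast rhoZ_nonneg E y
  · exact_mod_cast rhoZ_le E y

lemma harm_sq (E : GoodEnv m ν) (y : ℤ) (t : ℝ) :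
    ν y * (gZ ν (y + 1) - (t + 1)) ^ 2 + (1 - ν y) * (gZ ν (y - 1) - (t + 1)) ^ 2 ≤
      (gZ ν y - t) ^ 2 + (2 * m : ℝ) ^ 2 := by
  rcases E.half y with h | h
  · obtain ⟨h1, h2⟩ := half_expand E y h
    obtain ⟨hr0, hrm⟩ := rho_bounds E y
    set r := (rhoZ ν y : ℝ)
    have expand : ν y * (gZ ν (y + 1) - (t + 1)) ^ 2 + (1 - ν y) * (gZ ν (y - 1) - (t + 1)) ^ 2 =
        (gZ ν y - t) ^ 2 + 4 * r ^ 2 := by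
      rw [h, h1, h2]; ring
    rw [expand]
    nlinarith [hr0, hrm]
  · have h1 := drift_expand E y h
    have expand : ν y * (gZ ν (y + 1) - (t + 1)) ^ 2 + (1 - ν y) * (gZ ν (y - 1) - (t + 1)) ^ 2 =
        (gZ ν y - t) ^ 2 := by
      rw [h, h1]; ring
    rw [expand]
    nlinarith [sq_nonneg (2 * (m:ℝ))]

lemma harm_quart (E : GoodEnv m ν) (y : ℤ) (t : ℝ) :
    ν y * (gZ ν (y + 1) - (t + 1)) ^ 4 + (1 - ν y) * (gZ ν (y - 1) - (t + 1)) ^ 4 ≤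
      (gZ ν y - t) ^ 4 + 6 * (2 * m : ℝ) ^ 2 * (gZ ν y - t) ^ 2 + (2 * m : ℝ) ^ 4 := by
  rcases E.half y with h | h
  · obtain ⟨h1, h2⟩ := half_expand E y h
    obtain ⟨hr0, hrm⟩ := rho_bounds E y
    set r := (rhoZ ν y : ℝ)
    set a := gZ ν y - t with ha
    have expand : ν y * (gZ ν (y + 1) - (t + 1)) ^ 4 + (1 - ν y) * (gZ ν (y - 1) - (t + 1)) ^ 4 =
        a ^ 4 + 6 * a ^ 2 * (2*r) ^ 2 + (2*r) ^ 4 := by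
      rw [h, h1, h2, ha]; ring
    rw [expand]
    have hm2 : r^2 ≤ (m:ℝ)^2 := by nlinarith
    have hm4 : r^4 ≤ (m:ℝ)^4 := by nlinarith
    nlinarith [mul_nonneg (sq_nonneg a) (sub_nonneg.mpr hm2)]
  · have h1 := drift_expand E y h
    have expand : ν y * (gZ ν (y + 1) - (t + 1)) ^ 4 + (1 - ν y) * (gZ ν (y - 1) - (t + 1)) ^ 4 =
        (gZ ν y - t) ^ 4 := by
      rw [h, h1]; ring
    rw [expand]
    nlinarith [sq_nonneg (2 * (m:ℝ)), sq_nonneg ((2*(m:ℝ))^2), sq_nonneg (gZ ν y - t),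
      sq_nonneg ((gZ ν y - t) * (2*m)), sq_nonneg ((gZ ν y - t)^2)]

lemma II_zero : II 0 = {0} := by
  unfold II; norm_num

lemma SJ_zero_eq_one (E : GoodEnv m ν) (T : ℕ) : SJ ν 0 T = 1 := by
  induction T with
  | zero =>
    unfold SJ
    rw [II_zero, Finset.sum_singleton, QQ_zero]
    norm_num
  | succ T ih =>
    unfold SJ at ih ⊢
    simp only [pow_zero, mul_one] at ih ⊢
    have h := QQ_transfer (ν := ν) T (fun _ => (1:ℝ))
    simp only [mul_one] at h
    rw [h]
    have hc : ∀ y ∈ II T, QQ ν T y * (ν y + (1 - ν y)) = QQ ν T y := fun y _ => by ring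
    rw [Finset.sum_congr rfl hc]
    exact ih

lemma QQ_mass (E : GoodEnv m ν) (T : ℕ) : ∑ z ∈ II T, QQ ν T z = 1 := by
  have h := SJ_zero_eq_one E T
  unfold SJ at h
  simpa [pow_zero, mul_one] using h

lemma SJ_two_le (E : GoodEnv m ν) (T : ℕ) : SJ ν 2 T ≤ (2 * m : ℝ) ^ 2 * T := by
  induction T with
  | zero =>
    unfold SJ
    rw [II_zero, Finset.sum_singleton, QQ_zero, gZ_zero]
    norm_num
  | succ T ih =>
    unfold SJ at ih ⊢
    have h := QQ_transfer (ν := ν) T (fun z => (gZ ν z - ((T:ℝ) + 1)) ^ 2)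
    have hcast : ((T+1 : ℕ) : ℝ) = (T : ℝ) + 1 := by push_cast; ring
    rw [hcast, h]
    have hle : ∑ y ∈ II T, QQ ν T y *
          (ν y * (gZ ν (y+1) - ((T:ℝ) + 1)) ^ 2 + (1 - ν y) * (gZ ν (y-1) - ((T:ℝ) + 1)) ^ 2) ≤
        ∑ y ∈ II T, QQ ν T y * ((gZ ν y - (T:ℝ)) ^ 2 + (2 * m : ℝ) ^ 2) := by
      refine Finset.sum_le_sum fun y _ => ?_
      exact mul_le_mul_of_nonneg_left (harm_sq E y (T:ℝ)) (QQ_nonneg E T y)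
    refine hle.trans ?_
    have hsplit : ∑ y ∈ II T, QQ ν T y * ((gZ ν y - (T:ℝ)) ^ 2 + (2 * m : ℝ) ^ 2) =
        (∑ y ∈ II T, QQ ν T y * (gZ ν y - (T:ℝ)) ^ 2) + (2 * m : ℝ) ^ 2 *
          ∑ y ∈ II T, QQ ν T y := by
      rw [Finset.mul_sum]
      rw [← Finset.sum_add_distrib]
      refine Finset.sum_congr rfl fun y _ => ?_
      ring
    rw [hsplit, QQ_mass E T]
    push_cast
    linarith

lemma SJ_four_le (E : GoodEnv m ν) (T : ℕ) : SJ ν 4 T ≤ 4 * (2 * m : ℝ) ^ 4 * T ^ 2 := by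
  have hC2 : (0:ℝ) ≤ (2 * m : ℝ) ^ 2 := sq_nonneg _
  have hC4 : (0:ℝ) ≤ (2 * m : ℝ) ^ 4 := by positivity
  induction T with
  | zero =>
    unfold SJ
    rw [II_zero, Finset.sum_singleton, QQ_zero, gZ_zero]
    norm_num
  | succ T ih =>
    have h2 := SJ_two_le E T
    unfold SJ at ih ⊢
    have h := QQ_transfer (ν := ν) T (fun z => (gZ ν z - ((T:ℝ) + 1)) ^ 4)
    have hcast : ((T+1 : ℕ) : ℝ) = (T : ℝ) + 1 := by push_cast; ring
    rw [hcast, h]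
    have hle : ∑ y ∈ II T, QQ ν T y *
          (ν y * (gZ ν (y+1) - ((T:ℝ) + 1)) ^ 4 + (1 - ν y) * (gZ ν (y-1) - ((T:ℝ) + 1)) ^ 4) ≤
        ∑ y ∈ II T, QQ ν T y * ((gZ ν y - (T:ℝ)) ^ 4 +
          6 * (2 * m : ℝ) ^ 2 * (gZ ν y - (T:ℝ)) ^ 2 + (2 * m : ℝ) ^ 4) := by
      refine Finset.sum_le_sum fun y _ => ?_
      exact mul_le_mul_of_nonneg_left (harm_quart E y (T:ℝ)) (QQ_nonneg E T y)
    refine hle.trans ?_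
    have hsplit : ∑ y ∈ II T, QQ ν T y * ((gZ ν y - (T:ℝ)) ^ 4 +
          6 * (2 * m : ℝ) ^ 2 * (gZ ν y - (T:ℝ)) ^ 2 + (2 * m : ℝ) ^ 4) =
        (∑ y ∈ II T, QQ ν T y * (gZ ν y - (T:ℝ)) ^ 4) +
          6 * (2 * m : ℝ) ^ 2 * (∑ y ∈ II T, QQ ν T y * (gZ ν y - (T:ℝ)) ^ 2) +
          (2 * m : ℝ) ^ 4 * ∑ y ∈ II T, QQ ν T y := by
      rw [Finset.mul_sum, Finset.mul_sum, ← Finset.sum_add_distrib, ← Finset.sum_add_distrib]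
      refine Finset.sum_congr rfl fun y _ => ?_
      ring
    rw [hsplit, QQ_mass E T]
    have hS2 : SJ ν 2 T ≤ (2 * m : ℝ) ^ 2 * T := h2
    unfold SJ at hS2
    push_cast
    nlinarith [Nat.cast_nonneg (α := ℝ) T]

end Moments

/-! ### Probability estimates -/

section Prob

variable {m : ℕ} {ν : ℤ → ℝ} {P : Measure (ℕ → ℤ)}

/-- The set of nearest-neighbor trajectories started at `0`. -/
def NN : Set (ℕ → ℤ) :=
  {f | f 0 = 0 ∧ ∀ i : ℕ, f (i + 1) = f i + 1 ∨ f (i + 1) = f i - 1}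

lemma P_cyl (hP : IsWalkLaw (envStep ν) 0 P) (T : ℕ) (path : ℕ → ℤ) :
    P {f | ∀ i ≤ T, f i = path i} =
      (if path 0 = 0 then (1:ℝ≥0∞) else 0) *
        ∏ i ∈ Finset.range T, ENNReal.ofReal (envStep ν (path i) (path (i + 1))) :=
  hP.2 T path

lemma P_start (hP : IsWalkLaw (envStep ν) 0 P) : P {f : ℕ → ℤ | f 0 ≠ 0} = 0 := by
  have hsub : {f : ℕ → ℤ | f 0 ≠ 0} ⊆
      ⋃ (z : ℤ), {f : ℕ → ℤ | z ≠ 0 ∧ ∀ i ≤ 0, f i = z} := by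
    intro f hf
    exact Set.mem_iUnion.mpr ⟨f 0, hf, fun i hi => by rw [Nat.le_zero.mp hi]⟩
  refine le_antisymm (le_trans (measure_mono hsub) (le_trans (measure_iUnion_le _) ?_))
    zero_le
  have hz : ∀ z : ℤ, P {f : ℕ → ℤ | z ≠ 0 ∧ ∀ i ≤ 0, f i = z} = 0 := by
    intro z
    by_cases h : z = 0
    · have he : {f : ℕ → ℤ | z ≠ 0 ∧ ∀ i ≤ 0, f i = z} = ∅ := by
        ext f; simp [h]
      rw [he, measure_empty]
    · have he : {f : ℕ → ℤ | z ≠ 0 ∧ ∀ i ≤ 0, f i = z} =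
          {f : ℕ → ℤ | ∀ i ≤ 0, f i = (fun _ => z) i} := by
        ext f; simp [h]
      rw [he, hP.2 0 (fun _ => z)]
      simp [h]
  rw [tsum_congr hz]
  simp

lemma P_badstep (E : GoodEnv m ν) (hP : IsWalkLaw (envStep ν) 0 P) (i : ℕ) :
    P {f : ℕ → ℤ | ¬(f (i+1) = f i + 1 ∨ f (i+1) = f i - 1)} = 0 := by
  classical
  set Bi := {f : ℕ → ℤ | ¬(f (i+1) = f i + 1 ∨ f (i+1) = f i - 1)} with hBi
  have hsub : Bi ⊆ ⋃ (r : Fin (i+2) → ℤ),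
      ({f : ℕ → ℤ | ∀ j ≤ i + 1, f j = (fun k => if h : k < i + 2 then r ⟨k, h⟩ else 0) j} ∩ Bi) := by
    intro f hf
    refine Set.mem_iUnion.mpr ⟨fun k => f k, ⟨?_, hf⟩⟩
    intro j hj
    simp only []
    rw [dif_pos (show j < i + 2 by omega)]
  refine le_antisymm (le_trans (measure_mono hsub) (le_trans (measure_iUnion_le _) ?_)) zero_le
  have hz : ∀ r : Fin (i+2) → ℤ,
      P ({f : ℕ → ℤ | ∀ j ≤ i + 1, f j = (fun k => if h : k < i + 2 then r ⟨k, h⟩ else 0) j} ∩ Bi)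
        = 0 := by
    intro r
    set path : ℕ → ℤ := fun k => if h : k < i + 2 then r ⟨k, h⟩ else 0 with hpath
    by_cases hb : path (i+1) = path i + 1 ∨ path (i+1) = path i - 1
    · have he : {f : ℕ → ℤ | ∀ j ≤ i + 1, f j = path j} ∩ Bi = ∅ := by
        ext f
        simp only [Set.mem_inter_iff, Set.mem_setOf_eq, Set.mem_empty_iff_false, iff_false,
          not_and, hBi]
        intro hcyl
        rw [hcyl (i+1) le_rfl, hcyl i (by omega)]
        simp [hb]
      rw [he, measure_empty]
    · refine le_antisymm (le_trans (measure_mono Set.inter_subset_left) ?_) zero_le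
      rw [hP.2 (i+1) path]
      have hstep : envStep ν (path i) (path (i+1)) = 0 := by
        unfold envStep
        push_neg at hb
        rw [if_neg hb.1, if_neg hb.2]
      have : ∏ j ∈ Finset.range (i+1), ENNReal.ofReal (envStep ν (path j) (path (j+1))) = 0 := by
        refine Finset.prod_eq_zero (Finset.self_mem_range_succ i) ?_
        rw [hstep]
        simp
      rw [this, mul_zero]
  rw [tsum_congr hz]
  simp

lemma P_NN_compl (E : GoodEnv m ν) (hP : IsWalkLaw (envStep ν) 0 P) : P NNᶜ = 0 := by
  have hsub : NNᶜ ⊆ {f : ℕ → ℤ | f 0 ≠ 0} ∪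
      ⋃ (i : ℕ), {f : ℕ → ℤ | ¬(f (i+1) = f i + 1 ∨ f (i+1) = f i - 1)} := by
    intro f hf
    simp only [NN, Set.mem_compl_iff, Set.mem_setOf_eq, not_and, not_forall] at hf
    by_cases h0 : f 0 = 0
    · obtain ⟨i, hi⟩ := hf h0
      exact Or.inr (Set.mem_iUnion.mpr ⟨i, hi⟩)
    · exact Or.inl h0
  refine le_antisymm (le_trans (measure_mono hsub) ?_) zero_le
  refine le_trans (measure_union_le _ _) ?_
  have h1 : P {f : ℕ → ℤ | f 0 ≠ 0} = 0 := P_start hP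
  have h2 : P (⋃ (i : ℕ), {f : ℕ → ℤ | ¬(f (i+1) = f i + 1 ∨ f (i+1) = f i - 1)}) = 0 := by
    refine le_antisymm (le_trans (measure_iUnion_le _) ?_) zero_le
    rw [tsum_congr (P_badstep E hP)]
    simp
  rw [h1, h2, add_zero]

lemma NN_mem_cyl {f : ℕ → ℤ} (hf : f ∈ NN) (T : ℕ) :
    ∃ σ : Fin T → Bool, ∀ i ≤ T, f i = posP (extB T σ) i := by
  classical
  set σfull : ℕ → Bool := fun j => decide (f (j+1) = f j + 1) with hσfull
  have hclaim : ∀ i, f i = posP σfull i := by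
    intro i
    induction i with
    | zero => exact hf.1
    | succ i ih =>
      have hstep := hf.2 i
      rcases hstep with h | h
      · have hb : σfull i = true := by
          rw [hσfull]; simp [h]
        rw [posP, hb, h, ih]
        rfl
      · have hb : σfull i = false := by
          rw [hσfull]
          simp only [decide_eq_false_iff_not]
          rw [h]; omega
        rw [posP, hb, h, ih]
        rfl
  refine ⟨fun j => σfull j, fun i hi => (hclaim i).trans (posP_congr fun j hj => ?_)⟩
  rw [extB, dif_pos (by omega)]

lemma P_cyl_eval (E : GoodEnv m ν) (hP : IsWalkLaw (envStep ν) 0 P) (T : ℕ) (σ : Fin T → Bool) :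
    P {f | ∀ i ≤ T, f i = posP (extB T σ) i} = ENNReal.ofReal (wtP ν (extB T σ) T) := by
  rw [hP.2 T (posP (extB T σ))]
  have h0 : posP (extB T σ) 0 = (0:ℤ) := rfl
  rw [h0, if_pos rfl, one_mul,
    ← ENNReal.ofReal_prod_of_nonneg (fun i _ => envStep_nonneg E _ _)]
  rfl

lemma chebyshev (E : GoodEnv m ν) (hP : IsWalkLaw (envStep ν) 0 P)
    {ε : ℝ} (hε : 0 < ε) (T : ℕ) (hT : 1 ≤ T) :
    P {f | ε * T ≤ |gZ ν (f T) - T|} ≤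
      ENNReal.ofReal (4 * (2 * m : ℝ) ^ 4 / (ε ^ 4 * T ^ 2)) := by
  classical
  have hTpos : (0:ℝ) < T := by exact_mod_cast hT
  set Bad := {f : ℕ → ℤ | ε * T ≤ |gZ ν (f T) - T|} with hBad
  have hcover : Bad ⊆
      (⋃ σ : Fin T → Bool, ({f | ∀ i ≤ T, f i = posP (extB T σ) i} ∩ Bad)) ∪ NNᶜ := by
    intro f hf
    by_cases hfNN : f ∈ NN
    · obtain ⟨σ, hσ⟩ := NN_mem_cyl hfNN T
      exact Or.inl (Set.mem_iUnion.mpr ⟨σ, hσ, hf⟩)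
    · exact Or.inr hfNN
  have hbound : ∀ σ : Fin T → Bool,
      P ({f | ∀ i ≤ T, f i = posP (extB T σ) i} ∩ Bad) ≤
        ENNReal.ofReal (wtP ν (extB T σ) T *
          ((gZ ν (posP (extB T σ) T) - T) ^ 4 / (ε ^ 4 * (T:ℝ) ^ 4))) := by
    intro σ
    by_cases hb : ε * T ≤ |gZ ν (posP (extB T σ) T) - T|
    · refine le_trans (measure_mono Set.inter_subset_left) ?_
      rw [P_cyl_eval E hP T σ]
      apply ENNReal.ofReal_le_ofReal
      have hx4 : (ε * T) ^ 4 ≤ (gZ ν (posP (extB T σ) T) - T) ^ 4 := by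
        calc (ε * T) ^ 4 ≤ |gZ ν (posP (extB T σ) T) - T| ^ 4 :=
              pow_le_pow_left₀ (by positivity) hb 4
          _ = (gZ ν (posP (extB T σ) T) - T) ^ 4 := by
              rw [pow_abs, abs_of_nonneg (by positivity)]
      have h1 : (1:ℝ) ≤ (gZ ν (posP (extB T σ) T) - T) ^ 4 / (ε ^ 4 * (T:ℝ) ^ 4) := by
        rw [one_le_div (by positivity)]
        calc ε ^ 4 * (T:ℝ) ^ 4 = (ε * T) ^ 4 := by ring
          _ ≤ _ := hx4
      have hw := wtP_nonneg E (extB T σ) T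
      nlinarith
    · have he : {f | ∀ i ≤ T, f i = posP (extB T σ) i} ∩ Bad = ∅ := by
        ext f
        simp only [Set.mem_inter_iff, Set.mem_setOf_eq, Set.mem_empty_iff_false, iff_false,
          not_and, hBad]
        intro hcyl
        rw [hcyl T le_rfl]
        exact hb
      rw [he, measure_empty]
      exact zero_le
  calc P Bad ≤ P ((⋃ σ : Fin T → Bool, ({f | ∀ i ≤ T, f i = posP (extB T σ) i} ∩ Bad)) ∪ NNᶜ) :=
        measure_mono hcover
    _ ≤ P (⋃ σ : Fin T → Bool, ({f | ∀ i ≤ T, f i = posP (extB T σ) i} ∩ Bad)) + P NNᶜ :=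
        measure_union_le _ _
    _ = P (⋃ σ : Fin T → Bool, ({f | ∀ i ≤ T, f i = posP (extB T σ) i} ∩ Bad)) := by
        rw [P_NN_compl E hP, add_zero]
    _ ≤ ∑' σ : Fin T → Bool, P ({f | ∀ i ≤ T, f i = posP (extB T σ) i} ∩ Bad) :=
        measure_iUnion_le _
    _ = ∑ σ : Fin T → Bool, P ({f | ∀ i ≤ T, f i = posP (extB T σ) i} ∩ Bad) := tsum_fintype _
    _ ≤ ∑ σ : Fin T → Bool, ENNReal.ofReal (wtP ν (extB T σ) T *
          ((gZ ν (posP (extB T σ) T) - T) ^ 4 / (ε ^ 4 * (T:ℝ) ^ 4))) :=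
        Finset.sum_le_sum fun σ _ => hbound σ
    _ = ENNReal.ofReal (∑ σ : Fin T → Bool, wtP ν (extB T σ) T *
          ((gZ ν (posP (extB T σ) T) - T) ^ 4 / (ε ^ 4 * (T:ℝ) ^ 4))) := by
        rw [ENNReal.ofReal_sum_of_nonneg]
        intro σ _
        have hw := wtP_nonneg E (extB T σ) T
        positivity
    _ ≤ ENNReal.ofReal (4 * (2 * m : ℝ) ^ 4 / (ε ^ 4 * T ^ 2)) := by
        apply ENNReal.ofReal_le_ofReal
        rw [sum_wt_F T (fun z => (gZ ν z - T) ^ 4 / (ε ^ 4 * (T:ℝ) ^ 4))]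
        have hrw : ∑ z ∈ II T, QQ ν T z * ((gZ ν z - T) ^ 4 / (ε ^ 4 * (T:ℝ) ^ 4)) =
            SJ ν 4 T / (ε ^ 4 * (T:ℝ) ^ 4) := by
          unfold SJ
          rw [Finset.sum_div]
          exact Finset.sum_congr rfl fun z _ => by ring
        rw [hrw]
        have h4 := SJ_four_le E T
        have heq : 4 * (2 * m : ℝ) ^ 4 * T ^ 2 / (ε ^ 4 * (T:ℝ) ^ 4) =
            4 * (2 * m : ℝ) ^ 4 / (ε ^ 4 * T ^ 2) := by
          field_simp
        calc SJ ν 4 T / (ε ^ 4 * (T:ℝ) ^ 4) ≤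
              4 * (2 * m : ℝ) ^ 4 * T ^ 2 / (ε ^ 4 * (T:ℝ) ^ 4) :=
              (div_le_div_iff_of_pos_right (by positivity)).mpr h4
          _ = _ := heq

lemma borel_cantelli (E : GoodEnv m ν) (hP : IsWalkLaw (envStep ν) 0 P)
    {ε : ℝ} (hε : 0 < ε) :
    P (limsup (fun T : ℕ => {f : ℕ → ℤ | ε * T ≤ |gZ ν (f T) - T|}) atTop) = 0 := by
  haveI := hP.1
  apply measure_limsup_atTop_eq_zero
  classical
  set c := 4 * (2 * (m:ℝ)) ^ 4 / ε ^ 4 with hc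
  set B : ℕ → ℝ≥0∞ := fun T => if T = 0 then 1 else ENNReal.ofReal (c * (1 / (T:ℝ) ^ 2)) with hB
  have hle : ∀ T : ℕ, P {f : ℕ → ℤ | ε * T ≤ |gZ ν (f T) - T|} ≤ B T := by
    intro T
    by_cases hT : T = 0
    · rw [hB]
      simp only [hT, if_pos rfl]
      exact prob_le_one
    · have h1 : 1 ≤ T := Nat.one_le_iff_ne_zero.mpr hT
      rw [hB]
      simp only [if_neg hT]
      refine (chebyshev E hP hε T h1).trans (le_of_eq (congrArg ENNReal.ofReal ?_))
      rw [hc]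
      ring
  refine ne_top_of_le_ne_top ?_ (ENNReal.tsum_le_tsum hle)
  have hsummable : Summable (fun T : ℕ => c * (1 / ((T + 1 : ℕ):ℝ) ^ 2)) := by
    have h0 : Summable (fun n : ℕ => 1 / (n:ℝ) ^ 2) :=
      Real.summable_one_div_nat_pow.mpr (by norm_num)
    have h1 : Summable (fun n : ℕ => 1 / ((n + 1 : ℕ):ℝ) ^ 2) := by
      have h2 := h0.comp_injective Nat.succ_injective
      exact h2
    exact h1.mul_left c
  rw [tsum_eq_zero_add' ENNReal.summable]
  have hBsucc : ∀ T : ℕ, B (T + 1) = ENNReal.ofReal (c * (1 / ((T + 1 : ℕ):ℝ) ^ 2)) := by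
    intro T
    rw [hB]
    simp only [Nat.succ_ne_zero, if_neg]
    norm_num
  rw [tsum_congr hBsucc, ← ENNReal.ofReal_tsum_of_nonneg (fun T => by positivity) hsummable]
  have hB0 : B 0 = 1 := by simp [hB]
  rw [hB0]
  exact ENNReal.add_ne_top.mpr ⟨ENNReal.one_ne_top, ENNReal.ofReal_ne_top⟩

end Prob

/-! ### Density asymptotics of `g` -/

section Density

variable {m : ℕ} {ν : ℤ → ℝ}

def phiF (m : ℕ) (r : ℤ) : ℝ :=
  if r = 0 then 0 else (m : ℝ) * (m + 1) / 2 - (m : ℝ) * r + (r : ℝ) * (r - 1) / 2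

def cN (ν : ℤ → ℝ) (N : ℕ) : ℝ := ∑ x ∈ Finset.range N, if ν (x : ℤ) = 1 then (1:ℝ) else 0

lemma phiF_bound (E : GoodEnv m ν) (z : ℤ) : |phiF m (rhoZ ν z)| ≤ 3 * (m:ℝ)^2 + 3 * m + 3 := by
  have hm : (1:ℝ) ≤ (m:ℝ) := by exact_mod_cast E.hm
  obtain ⟨hr0, hrm⟩ := rho_bounds E z
  unfold phiF
  split_ifs with h
  · rw [abs_zero]; positivity
  · have hr1 : (1:ℝ) ≤ (rhoZ ν z : ℝ) := by
      have : 1 ≤ rhoZ ν z := by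
        have := rhoZ_nonneg E z
        omega
      exact_mod_cast this
    rw [abs_le]
    constructor <;> nlinarith

lemma phiF_succ (mm : ℕ) (r : ℤ) (hr : 1 ≤ r) :
    phiF mm (r + 1) - phiF mm r = (r : ℝ) - mm := by
  unfold phiF
  rw [if_neg (by omega), if_neg (by omega)]
  push_cast
  ring

lemma key_step (E : GoodEnv m ν) (N : ℕ) :
    ((m : ℝ) - (rhoZ ν (N : ℤ) : ℝ)) =
      (m : ℝ) * (m + 1) / 2 * (if ν (N : ℤ) = 1 then (1:ℝ) else 0)
        - phiF m (rhoZ ν ((N : ℤ) + 1)) + phiF m (rhoZ ν (N : ℤ)) := by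
  have hm : 1 ≤ m := E.hm
  by_cases hd : ν ((N : ℤ) + 1) = 1
  · -- next site is a drift site
    have hr1 : rhoZ ν ((N : ℤ) + 1) = 0 := (rhoZ_eq_zero_iff E _).mpr hd
    have hr2 := rhoZ_of_succ_drift E (N : ℤ) hd
    rcases hr2 with h | h
    · -- rho N = m - 1
      by_cases hm1 : m = 1
      · have hr : rhoZ ν (N : ℤ) = 0 := by omega
        have hdr : ν (N : ℤ) = 1 := (rhoZ_eq_zero_iff E _).mp hr
        rw [if_pos hdr, hr1, hr]
        subst hm1
        unfold phiF
        norm_num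
      · have hm2 : 2 ≤ m := by omega
        have hr : 1 ≤ rhoZ ν (N : ℤ) := by omega
        have hdr : ¬ (ν (N : ℤ) = 1) := by
          intro hcc
          have := (rhoZ_eq_zero_iff E ((N : ℤ))).mpr hcc
          omega
        rw [if_neg hdr, hr1, h]
        unfold phiF
        rw [if_pos rfl, if_neg (by omega)]
        push_cast [hm2]
        have : ((m:ℝ) - 1) = (m:ℝ) - 1 := rfl
        field_simp
        ring
    · -- rho N = m
      have hr : 1 ≤ rhoZ ν (N : ℤ) := by omega
      have hdr : ¬ (ν (N : ℤ) = 1) := by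
        intro hcc
        have := (rhoZ_eq_zero_iff E ((N : ℤ))).mpr hcc
        omega
      rw [if_neg hdr, hr1, h]
      unfold phiF
      rw [if_pos rfl, if_neg (by omega)]
      push_cast
      ring
  · -- next site is not a drift site
    have hr1 : rhoZ ν ((N : ℤ) + 1) = rhoZ ν (N : ℤ) + 1 := rhoZ_succ_of_not_drift E _ hd
    by_cases hdr : ν (N : ℤ) = 1
    · have hr0 : rhoZ ν (N : ℤ) = 0 := (rhoZ_eq_zero_iff E _).mpr hdr
      rw [if_pos hdr, hr1, hr0]
      unfold phiF
      rw [if_pos rfl, if_neg (by omega)]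
      push_cast
      ring
    · have hr0 : 1 ≤ rhoZ ν (N : ℤ) := by
        have h1 := rhoZ_nonneg E (N : ℤ)
        have h2 : rhoZ ν (N : ℤ) ≠ 0 := fun hc => hdr ((rhoZ_eq_zero_iff E _).mp hc)
        omega
      rw [if_neg hdr, hr1]
      have := phiF_succ m (rhoZ ν (N : ℤ)) hr0
      linarith

lemma key_invariant (E : GoodEnv m ν) (N : ℕ) :
    ∑ x ∈ Finset.range N, ((m : ℝ) - (rhoZ ν (x : ℤ) : ℝ)) =
      (m : ℝ) * (m + 1) / 2 * cN ν N - phiF m (rhoZ ν (N : ℤ)) + phiF m (rhoZ ν 0) := by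
  induction N with
  | zero =>
    simp [cN]
  | succ N ih =>
    rw [Finset.sum_range_succ, ih]
    have hcN : cN ν (N + 1) = cN ν N + (if ν (N : ℤ) = 1 then (1:ℝ) else 0) := by
      unfold cN
      rw [Finset.sum_range_succ]
    rw [hcN]
    have hcast : ((N + 1 : ℕ) : ℤ) = (N : ℤ) + 1 := by push_cast; ring
    rw [hcast]
    have := key_step E N
    ring_nf
    ring_nf at this ih ⊢
    linarith

lemma gZ_nat (E : GoodEnv m ν) (N : ℕ) :
    gZ ν (N : ℤ) = (N : ℝ) + 2 * ∑ x ∈ Finset.range N, (rhoZ ν (x : ℤ) : ℝ) := by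
  induction N with
  | zero => simp [gZ_zero]
  | succ N ih =>
    have hcast : ((N + 1 : ℕ) : ℤ) = (N : ℤ) + 1 := by push_cast; ring
    rw [hcast, gZ_succ, ih, Finset.sum_range_succ]
    unfold WZ
    push_cast
    ring

lemma gZ_div_tendsto (E : GoodEnv m ν) {lam : ℝ}
    (hden : Tendsto (fun N : ℕ => cN ν N / N) atTop (nhds lam)) :
    Tendsto (fun N : ℕ => gZ ν (N : ℤ) / N) atTop
      (nhds (2 * (m : ℝ) + 1 - (m : ℝ) * ((m : ℝ) + 1) * lam)) := by
  set Bp : ℝ := 3 * (m:ℝ)^2 + 3 * m + 3 with hBp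
  have hkey : ∀ N : ℕ, gZ ν (N : ℤ) =
      (1 + 2 * (m:ℝ)) * N - (m:ℝ) * ((m:ℝ) + 1) * cN ν N
        + 2 * (phiF m (rhoZ ν (N : ℤ)) - phiF m (rhoZ ν 0)) := by
    intro N
    have h1 := key_invariant E N
    have h2 := gZ_nat E N
    have h3 : ∑ x ∈ Finset.range N, ((m : ℝ) - (rhoZ ν (x : ℤ) : ℝ)) =
        (N : ℝ) * m - ∑ x ∈ Finset.range N, (rhoZ ν (x : ℤ) : ℝ) := by
      rw [Finset.sum_sub_distrib, Finset.sum_const, Finset.card_range, nsmul_eq_mul]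
    rw [h3] at h1
    rw [h2]
    linarith
  have hsmall : Tendsto
      (fun N : ℕ => (2 * (phiF m (rhoZ ν (N : ℤ)) - phiF m (rhoZ ν 0))) / N) atTop (nhds 0) := by
    refine squeeze_zero_norm ?_ (tendsto_const_div_atTop_nhds_zero_nat (4 * Bp))
    intro N
    rw [Real.norm_eq_abs]
    rcases Nat.eq_zero_or_pos N with h0 | h0
    · subst h0
      simp
    · have hNpos : (0:ℝ) < N := by exact_mod_cast h0
      rw [abs_div, abs_of_pos hNpos, div_le_div_iff₀ hNpos hNpos]
      have hb1 := phiF_bound E (N : ℤ)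
      have hb2 := phiF_bound E 0
      have habs : |2 * (phiF m (rhoZ ν (N : ℤ)) - phiF m (rhoZ ν 0))| ≤ 4 * Bp := by
        have htri : |phiF m (rhoZ ν (N : ℤ)) - phiF m (rhoZ ν 0)| ≤
            |phiF m (rhoZ ν (N : ℤ))| + |phiF m (rhoZ ν 0)| := abs_sub _ _
        rw [abs_mul, abs_two, hBp]
        linarith
      nlinarith [habs, hNpos]
  have hmain : Tendsto (fun N : ℕ =>
      (1 + 2 * (m:ℝ)) - (m:ℝ) * ((m:ℝ) + 1) * (cN ν N / N)
        + (2 * (phiF m (rhoZ ν (N : ℤ)) - phiF m (rhoZ ν 0))) / N) atTop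
      (nhds ((1 + 2 * (m:ℝ)) - (m:ℝ) * ((m:ℝ) + 1) * lam + 0)) := by
    exact (tendsto_const_nhds.sub (hden.const_mul _)).add hsmall
  have hfinal : ((1 + 2 * (m:ℝ)) - (m:ℝ) * ((m:ℝ) + 1) * lam + 0) =
      2 * (m : ℝ) + 1 - (m : ℝ) * ((m : ℝ) + 1) * lam := by ring
  rw [hfinal] at hmain
  refine Tendsto.congr' ?_ hmain
  filter_upwards [eventually_ge_atTop 1] with N hN
  have hNpos : (0:ℝ) < N := by exact_mod_cast hN
  rw [hkey N]
  field_simp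
  try ring

end Density

/-! ### Endgame -/

section Endgame

variable {m : ℕ} {ν : ℤ → ℝ}

lemma good_to_tendsto {f : ℕ → ℤ}
    (h : ∀ k : ℕ, ∀ᶠ T : ℕ in atTop, ¬ ((1 / ((k:ℝ) + 1)) * T ≤ |gZ ν (f T) - T|)) :
    Tendsto (fun T : ℕ => gZ ν (f T) / T) atTop (nhds 1) := by
  rw [Metric.tendsto_atTop]
  intro ε hε
  obtain ⟨k, hk⟩ := exists_nat_one_div_lt hε
  obtain ⟨N, hN⟩ := eventually_atTop.mp (h k)
  refine ⟨max N 1, fun T hT => ?_⟩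
  have hT1 : 1 ≤ T := le_trans (le_max_right N 1) hT
  have hTN : N ≤ T := le_trans (le_max_left N 1) hT
  have hb := hN T hTN
  push_neg at hb
  rw [Real.dist_eq]
  have hTpos : (0:ℝ) < T := by exact_mod_cast hT1
  have heq : gZ ν (f T) / T - 1 = (gZ ν (f T) - T) / T := by
    field_simp
  rw [heq, abs_div, abs_of_pos hTpos]
  calc |gZ ν (f T) - T| / T < (1 / ((k:ℝ) + 1) * T) / T := (div_lt_div_iff_of_pos_right hTpos).mpr hb
    _ = 1 / ((k:ℝ) + 1) := by field_simp
    _ < ε := hk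

lemma endgame (E : GoodEnv m ν) {lam D : ℝ}
    (hD : D = 2 * (m : ℝ) + 1 - (m : ℝ) * ((m : ℝ) + 1) * lam) (hDpos : 0 < D)
    (hg : Tendsto (fun N : ℕ => gZ ν (N : ℤ) / N) atTop (nhds D))
    {f : ℕ → ℤ}
    (hf : Tendsto (fun T : ℕ => gZ ν (f T) / T) atTop (nhds 1)) :
    Tendsto (fun T : ℕ => (f T : ℝ) / T) atTop (nhds (1 / D)) := by
  -- g(z)/z → D along ℤ
  have htoNat : Tendsto (fun z : ℤ => z.toNat) atTop atTop := by
    refine tendsto_atTop.mpr fun N => ?_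
    filter_upwards [eventually_ge_atTop (max (N:ℤ) 0)] with z hz
    have h0 : (0:ℤ) ≤ z := le_trans (le_max_right _ _) hz
    exact (Int.le_toNat h0).mpr (le_trans (le_max_left _ _) hz)
  have hg1 : Tendsto (fun z : ℤ => gZ ν z / (z:ℝ)) atTop (nhds D) := by
    refine Tendsto.congr' ?_ (hg.comp htoNat)
    filter_upwards [eventually_ge_atTop (0:ℤ)] with z hz
    have h1 : ((z.toNat : ℕ) : ℤ) = z := Int.toNat_of_nonneg hz
    show gZ ν ((z.toNat : ℕ) : ℤ) / ((z.toNat : ℕ) : ℝ) = gZ ν z / (z:ℝ)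
    have h2 : ((z.toNat : ℕ) : ℝ) = ((z : ℤ) : ℝ) := by exact_mod_cast congrArg (fun w : ℤ => (w : ℝ)) h1
    rw [h1, h2]
  -- g(f T) → ∞
  have hup : Tendsto (fun T : ℕ => gZ ν (f T)) atTop atTop := by
    have hhalf : ∀ᶠ T : ℕ in atTop, (T:ℝ) / 2 ≤ gZ ν (f T) := by
      have h1 : ∀ᶠ T : ℕ in atTop, 1/2 < gZ ν (f T) / T :=
        hf.eventually (eventually_gt_nhds (by norm_num : (1:ℝ)/2 < 1))
      filter_upwards [h1, eventually_ge_atTop 1] with T hT h1T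
      have hTpos : (0:ℝ) < T := by exact_mod_cast h1T
      rw [lt_div_iff₀ hTpos] at hT
      nlinarith
    refine tendsto_atTop_mono' atTop hhalf ?_
    exact (tendsto_natCast_atTop_atTop (R := ℝ)).atTop_div_const (by norm_num)
  -- f T → ∞ in ℤ
  have hfa : Tendsto (fun T : ℕ => f T) atTop atTop := by
    refine tendsto_atTop.mpr fun B => ?_
    filter_upwards [hup.eventually (eventually_gt_atTop (gZ ν B))] with T hT
    by_contra hc
    push_neg at hc
    have := gZ_mono E (le_of_lt hc)
    exact absurd hT (not_lt.mpr this)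
  have hD2 : Tendsto (fun T : ℕ => gZ ν (f T) / ((f T : ℤ) : ℝ)) atTop (nhds D) := hg1.comp hfa
  have hdiv : Tendsto (fun T : ℕ => (gZ ν (f T) / T) / (gZ ν (f T) / ((f T : ℤ) : ℝ)))
      atTop (nhds (1 / D)) := hf.div hD2 (ne_of_gt hDpos)
  refine Tendsto.congr' ?_ hdiv
  filter_upwards [hup.eventually (eventually_gt_atTop 0)] with T hT
  have ha : gZ ν (f T) ≠ 0 := ne_of_gt hT
  set a := gZ ν (f T)
  set t := ((T : ℕ) : ℝ)
  set z := ((f T : ℤ) : ℝ)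
  show (a / t) / (a / z) = z / t
  rw [div_eq_mul_inv (a / t), inv_div, div_mul_div_comm, mul_comm t a, mul_div_mul_left z t ha]


end Endgame

end RWREspeed

open RWREspeed

/-- For `λ = n/(mn+l)` and any `Υ` environment `ν` with gaps `m` or `m+1` and drift
density `λ`, the walk started at `0` has a.s. speed `1/(2m+1−m(m+1)λ)`. -/
theorem speed_of_upsilon_env
    (n m l : ℕ) (hn : 1 < n) (hl0 : 0 < l) (hln : l < n)
    (ν : ℤ → ℝ) (hν : IsUpsilonEnv m ((n : ℝ) / ((m : ℝ) * n + l)) ν)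
    (P : Measure (ℕ → ℤ)) (hP : IsWalkLaw (envStep ν) 0 P) :
    ∀ᵐ f ∂P, Filter.Tendsto (fun k : ℕ => (f k : ℝ) / k) Filter.atTop
      (nhds (1 / (2 * (m : ℝ) + 1 - (m : ℝ) * ((m : ℝ) + 1) * ((n : ℝ) / ((m : ℝ) * n + l))))) := by
  obtain ⟨hhalf, hbelow, hgap, hden⟩ := hν
  by_cases hm0 : m = 0
  · -- contradiction: with m = 0 every site right of a drift site is a drift site,
    -- so the density is 1, but λ = n/l > 1.
    exfalso
    subst hm0
    obtain ⟨y, hy0, hy1⟩ := hbelow 0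
    have hall : ∀ k : ℕ, ν (y + k) = 1 := by
      intro k
      induction k with
      | zero => simpa using hy1
      | succ k ih =>
        obtain ⟨y', h1, h2, h3, _⟩ := hgap _ ih
        have hy' : y' = y + (k : ℤ) + 1 := by
          rcases h3 with h | h <;> push_cast at h <;> omega
        have : ((k:ℕ) + 1 : ℕ) = ((k:ℕ) + 1) := rfl
        rw [show y + ((k + 1 : ℕ) : ℤ) = y' by push_cast; omega]
        exact h2
    have hterm : ∀ N : ℕ, (∑ x ∈ Finset.range N, if ν (x : ℤ) = 1 then (1:ℝ) else 0) = N := by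
      intro N
      have hone : ∀ x ∈ Finset.range N, (if ν (x : ℤ) = 1 then (1:ℝ) else 0) = 1 := by
        intro x _
        have hxy : y ≤ (x : ℤ) := by
          have : (0:ℤ) ≤ (x:ℤ) := by positivity
          omega
        have h := hall ((x : ℤ) - y).toNat
        rw [show y + ((((x:ℤ) - y).toNat : ℕ) : ℤ) = (x:ℤ) by omega] at h
        rw [if_pos h]
      rw [Finset.sum_congr rfl hone, Finset.sum_const, Finset.card_range, nsmul_eq_mul, mul_one]
    have h1 : Tendsto
        (fun N : ℕ => (∑ x ∈ Finset.range N, if ν (x : ℤ) = 1 then (1:ℝ) else 0) / N)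
        atTop (nhds 1) := by
      refine Tendsto.congr' ?_ (tendsto_const_nhds (x := (1:ℝ)))
      filter_upwards [eventually_ge_atTop 1] with N hN
      have hNpos : (0:ℝ) < N := by exact_mod_cast hN
      rw [hterm N, div_self (ne_of_gt hNpos)]
    have huniq := tendsto_nhds_unique h1 hden
    have hl' : (0:ℝ) < l := by exact_mod_cast hl0
    rw [show ((0:ℕ):ℝ) * n + l = (l:ℝ) by push_cast; ring] at huniq
    have : (n : ℝ) = l := by
      field_simp at huniq
      linarith
    have : n = l := by exact_mod_cast this
    omega
  · have hm1 : 1 ≤ m := Nat.one_le_iff_ne_zero.mpr hm0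
    have E : GoodEnv m ν := ⟨hhalf, hbelow, hgap, hm1⟩
    haveI := hP.1
    set lam : ℝ := (n : ℝ) / ((m : ℝ) * n + l) with hlam
    set D : ℝ := 2 * (m : ℝ) + 1 - (m : ℝ) * ((m : ℝ) + 1) * lam with hDdef
    have hmR : (1:ℝ) ≤ (m:ℝ) := by exact_mod_cast hm1
    have hnR : (2:ℝ) ≤ (n:ℝ) := by exact_mod_cast hn
    have hlR : (1:ℝ) ≤ (l:ℝ) := by exact_mod_cast hl0
    have hdenpos : (0:ℝ) < (m:ℝ) * n + l := by nlinarith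
    have hlt : (m : ℝ) * ((m : ℝ) + 1) * lam < (m:ℝ) + 1 := by
      have hrw : (m:ℝ) * ((m:ℝ) + 1) * lam = ((m:ℝ) * ((m:ℝ) + 1) * n) / ((m:ℝ) * n + l) := by
        rw [hlam]; ring
      rw [hrw, div_lt_iff₀ hdenpos]
      nlinarith
    have hDpos : 0 < D := by rw [hDdef]; nlinarith
    have hgd : Tendsto (fun N : ℕ => gZ ν (N : ℤ) / N) atTop (nhds D) := by
      rw [hDdef]
      exact gZ_div_tendsto E hden
    have hbc : ∀ k : ℕ,
        P (limsup (fun T : ℕ => {f : ℕ → ℤ | (1/((k:ℝ)+1)) * T ≤ |gZ ν (f T) - T|}) atTop) = 0 :=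
      fun k => borel_cantelli E hP (by positivity)
    have hN0 : P (⋃ k : ℕ,
        limsup (fun T : ℕ => {f : ℕ → ℤ | (1/((k:ℝ)+1)) * T ≤ |gZ ν (f T) - T|}) atTop) = 0 := by
      refine le_antisymm (le_trans (measure_iUnion_le _) ?_) zero_le
      rw [tsum_congr hbc]
      simp
    rw [ae_iff]
    refine measure_mono_null ?_ hN0
    intro f hf
    simp only [Set.mem_setOf_eq] at hf
    by_contra hfn
    apply hf
    have hgood : ∀ k : ℕ, ∀ᶠ T : ℕ in atTop, ¬ ((1/((k:ℝ)+1)) * T ≤ |gZ ν (f T) - T|) := by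
      intro k
      have hnotin : f ∉ limsup
          (fun T : ℕ => {f : ℕ → ℤ | (1/((k:ℝ)+1)) * T ≤ |gZ ν (f T) - T|}) atTop := by
        intro hc
        exact hfn (Set.mem_iUnion.mpr ⟨k, hc⟩)
      rw [mem_limsup_iff_frequently_mem] at hnotin
      exact not_frequently.mp hnotin
    have hf1 : Tendsto (fun T : ℕ => gZ ν (f T) / T) atTop (nhds 1) := good_to_tendsto hgood
    exact endgame E hDdef hDpos hgd hf1
end
end

section
/- Let m ∈ ℕ, m ≥ 1, 1/2 < p ≤ 1, and let ω be the environment on ℤ with ω(x) = p whenever m divides x and ω(x) = 1/2 otherwise. Then for the walk started at 0, the probability of hitting m before hitting −m equals p, i.e. P^0_ω(T_m < T_{−m}) = p, and the expected exit time of the interval (−m, m) is E^0_ω[T_m ∧ T_{−m}] = m². -/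
open MeasureTheory Filter Finset Matrix
open scoped ENNReal
noncomputable section

namespace XPf

open scoped Classical

lemma mcoord (k : ℕ) (s : Set ℤ) : MeasurableSet {f : ℕ → ℤ | f k ∈ s} :=
  measurable_pi_apply k trivial

/-- extension of a finite vector to `ℕ → ℤ` -/
def extv (n : ℕ) (v : Fin (n+1) → ℤ) : ℕ → ℤ := fun i => if h : i < n + 1 then v ⟨i, h⟩ else 0

lemma extv_eq (n : ℕ) (v : Fin (n+1) → ℤ) {i : ℕ} (h : i ≤ n) :
    extv n v i = v ⟨i, by omega⟩ := dif_pos (by omega)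

def cyl (n : ℕ) (v : Fin (n+1) → ℤ) : Set (ℕ → ℤ) := {f | ∀ i ≤ n, f i = extv n v i}

def wt (st : ℤ → ℤ → ℝ) (x : ℤ) (n : ℕ) (v : Fin (n+1) → ℤ) : ℝ≥0∞ :=
  (if extv n v 0 = x then (1:ℝ≥0∞) else 0) *
    ∏ i ∈ Finset.range n, ENNReal.ofReal (st (extv n v i) (extv n v (i+1)))

lemma measurableSet_cyl (n : ℕ) (v : Fin (n+1) → ℤ) : MeasurableSet (cyl n v) := by
  have : cyl n v = ⋂ (i : ℕ) (_ : i ≤ n), {f : ℕ → ℤ | f i ∈ ({extv n v i} : Set ℤ)} := by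
    ext f; simp [cyl]
  rw [this]
  exact MeasurableSet.iInter fun i => MeasurableSet.iInter fun _ => mcoord i _

lemma P_cyl {P : Measure (ℕ → ℤ)} {st : ℤ → ℤ → ℝ} {x : ℤ}
    (hP : IsWalkLaw st x P) (n : ℕ) (v : Fin (n+1) → ℤ) :
    P (cyl n v) = wt st x n v := hP.2 n (extv n v)

/-- Master decomposition lemma: the measure of any event depending on coordinates
`≤ n` is the sum of the weights of its cylinders. -/
lemma master {P : Measure (ℕ → ℤ)} {st : ℤ → ℤ → ℝ} {x : ℤ}
    (hP : IsWalkLaw st x P) (n : ℕ) (S : Set (ℕ → ℤ))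
    (hdep : ∀ f g : ℕ → ℤ, (∀ i ≤ n, f i = g i) → f ∈ S → g ∈ S) :
    P S = ∑' v : Fin (n+1) → ℤ, S.indicator (fun _ => wt st x n v) (extv n v) := by
  have hset : S = ⋃ v : Fin (n+1) → ℤ, (if extv n v ∈ S then cyl n v else ∅) := by
    ext f
    constructor
    · intro hf
      refine Set.mem_iUnion.2 ⟨fun i => f i, ?_⟩
      have hagree : ∀ i ≤ n, f i = extv n (fun i : Fin (n+1) => f i) i := by
        intro i hi; rw [extv_eq n _ hi]
      rw [if_pos (hdep f _ hagree hf)]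
      exact hagree
    · intro hf
      rcases Set.mem_iUnion.1 hf with ⟨v, hv⟩
      by_cases hm : extv n v ∈ S
      · rw [if_pos hm] at hv
        exact hdep (extv n v) f (fun i hi => (hv i hi).symm) hm
      · rw [if_neg hm] at hv; exact absurd hv (Set.notMem_empty f)
  conv_lhs => rw [hset]
  rw [measure_iUnion ?_ ?_]
  · refine tsum_congr fun v => ?_
    by_cases hm : extv n v ∈ S
    · rw [if_pos hm, Set.indicator_of_mem hm, P_cyl hP]
    · rw [if_neg hm, Set.indicator_of_notMem hm, measure_empty]
  · intro v w hvw
    simp only [Function.onFun]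
    by_cases hv : extv n v ∈ S
    · by_cases hw : extv n w ∈ S
      · rw [if_pos hv, if_pos hw]
        refine Set.disjoint_left.2 fun f hfv hfw => hvw ?_
        funext i
        have h1 := hfv i.val (by omega)
        have h2 := hfw i.val (by omega)
        rw [extv_eq n v (by omega : i.val ≤ n)] at h1
        rw [extv_eq n w (by omega : i.val ≤ n)] at h2
        exact h1.symm.trans h2
      · rw [if_neg hw]; exact Set.disjoint_right.2 (by simp)
    · rw [if_neg hv]; exact Set.disjoint_left.2 (by simp)
  · intro v
    by_cases hv : extv n v ∈ S
    · rw [if_pos hv]; exact measurableSet_cyl n v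
    · rw [if_neg hv]; exact MeasurableSet.empty

/-- snoc equivalence -/
def snocE (n : ℕ) : (Fin (n+1) → ℤ) × ℤ ≃ (Fin (n+2) → ℤ) where
  toFun := fun uy => Fin.snoc uy.1 uy.2
  invFun := fun v => (fun i => v i.castSucc, v (Fin.last (n+1)))
  left_inv := by
    rintro ⟨u, y⟩
    simp [Fin.snoc_castSucc, Fin.snoc_last]
  right_inv := by
    intro v; funext i
    refine Fin.lastCases ?_ ?_ i <;> simp

lemma snocE_apply (n : ℕ) (u : Fin (n+1) → ℤ) (y : ℤ) :
    snocE n (u, y) = Fin.snoc u y := rfl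

lemma extv_snoc_le (n : ℕ) (u : Fin (n+1) → ℤ) (y : ℤ) {i : ℕ} (h : i ≤ n) :
    extv (n+1) (snocE n (u, y)) i = extv n u i := by
  rw [extv_eq (n+1) _ (by omega : i ≤ n+1), extv_eq n u h, snocE_apply]
  have : (⟨i, by omega⟩ : Fin (n+2)) = Fin.castSucc ⟨i, by omega⟩ := rfl
  rw [this, Fin.snoc_castSucc]

lemma extv_snoc_last (n : ℕ) (u : Fin (n+1) → ℤ) (y : ℤ) :
    extv (n+1) (snocE n (u, y)) (n+1) = y := by
  rw [extv_eq (n+1) _ (le_refl (n+1)), snocE_apply]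
  have : (⟨n+1, by omega⟩ : Fin (n+2)) = Fin.last (n+1) := rfl
  rw [this, Fin.snoc_last]

lemma wt_snoc (st : ℤ → ℤ → ℝ) (x : ℤ) (n : ℕ) (u : Fin (n+1) → ℤ) (y : ℤ) :
    wt st x (n+1) (snocE n (u, y)) = wt st x n u * ENNReal.ofReal (st (extv n u n) y) := by
  unfold wt
  rw [Finset.prod_range_succ]
  have h0 : extv (n+1) (snocE n (u, y)) 0 = extv n u 0 := extv_snoc_le n u y (by omega)
  have hprod : ∀ i ∈ Finset.range n,
      ENNReal.ofReal (st (extv (n+1) (snocE n (u, y)) i) (extv (n+1) (snocE n (u, y)) (i+1)))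
      = ENNReal.ofReal (st (extv n u i) (extv n u (i+1))) := by
    intro i hi
    rw [Finset.mem_range] at hi
    rw [extv_snoc_le n u y (by omega : i ≤ n), extv_snoc_le n u y (by omega : i + 1 ≤ n)]
  rw [Finset.prod_congr rfl hprod, h0,
    extv_snoc_le n u y (le_refl n), extv_snoc_last n u y]
  ring

/-- One-step peel lemma (Markov property at a fixed step). -/
lemma peel {P : Measure (ℕ → ℤ)} {ω : ℤ → ℝ} {x : ℤ}
    (hP : IsWalkLaw (envStep ω) x P) (n : ℕ) (z : ℤ) (C : (ℕ → ℤ) → Prop)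
    (hdep : ∀ f g : ℕ → ℤ, (∀ i ≤ n, f i = g i) → C f → C g) :
    P {f | C f ∧ f (n+1) = z} =
      P {f | C f ∧ f n = z - 1} * ENNReal.ofReal (envStep ω (z-1) z) +
      P {f | C f ∧ f n = z + 1} * ENNReal.ofReal (envStep ω (z+1) z) := by
  have hdep1 : ∀ f g : ℕ → ℤ, (∀ i ≤ n + 1, f i = g i) →
      f ∈ {f : ℕ → ℤ | C f ∧ f (n+1) = z} → g ∈ {f : ℕ → ℤ | C f ∧ f (n+1) = z} := by
    rintro f g hfg ⟨h1, h2⟩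
    exact ⟨hdep f g (fun i hi => hfg i (by omega)) h1, (hfg (n+1) (le_refl _)).symm.trans h2⟩
  have hdepy : ∀ y : ℤ, ∀ f g : ℕ → ℤ, (∀ i ≤ n, f i = g i) →
      f ∈ {f : ℕ → ℤ | C f ∧ f n = y} → g ∈ {f : ℕ → ℤ | C f ∧ f n = y} := by
    rintro y f g hfg ⟨h1, h2⟩
    exact ⟨hdep f g hfg h1, (hfg n (le_refl _)).symm.trans h2⟩
  rw [master hP (n+1) _ hdep1, master hP n _ (hdepy (z-1)), master hP n _ (hdepy (z+1))]
  have key : ∀ uy : (Fin (n+1) → ℤ) × ℤ,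
      ({f : ℕ → ℤ | C f ∧ f (n+1) = z}.indicator
          (fun _ => wt (envStep ω) x (n+1) (snocE n uy)) (extv (n+1) (snocE n uy)))
      = (if uy.2 = z then
          (if C (extv n uy.1) then wt (envStep ω) x n uy.1 *
            ENNReal.ofReal (envStep ω (extv n uy.1 n) uy.2) else 0) else 0) := by
    rintro ⟨u, y⟩
    have hC : C (extv (n+1) (snocE n (u, y))) ↔ C (extv n u) := by
      constructor
      · exact fun h => hdep _ _ (fun i hi => (extv_snoc_le n u y hi)) h
      · exact fun h => hdep _ _ (fun i hi => (extv_snoc_le n u y hi).symm) h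
    by_cases hy : y = z
    · by_cases hc : C (extv n u)
      · rw [Set.indicator_of_mem (by exact ⟨hC.2 hc, (extv_snoc_last n u y).trans hy⟩),
          if_pos hy, if_pos hc, wt_snoc]
      · rw [Set.indicator_of_notMem (fun h => hc (hC.1 h.1)), if_pos hy, if_neg hc]
    · rw [Set.indicator_of_notMem (fun h => hy (((extv_snoc_last n u y).symm.trans h.2))),
        if_neg hy]
  have step1 : (∑' v : Fin (n+1+1) → ℤ,
      {f : ℕ → ℤ | C f ∧ f (n+1) = z}.indicator
        (fun _ => wt (envStep ω) x (n+1) v) (extv (n+1) v))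
      = ∑' u : Fin (n+1) → ℤ, ∑' y : ℤ, (if y = z then
          (if C (extv n u) then wt (envStep ω) x n u *
            ENNReal.ofReal (envStep ω (extv n u n) y) else 0) else 0) := by
    rw [← (snocE n).tsum_eq]
    refine Eq.trans (tsum_congr key) ?_
    exact ENNReal.tsum_prod'
  refine step1.trans ?_
  have inner : ∀ u : Fin (n+1) → ℤ,
      (∑' y : ℤ, if y = z then
          (if C (extv n u) then wt (envStep ω) x n u *
            ENNReal.ofReal (envStep ω (extv n u n) y) else 0) else 0)
      = (if C (extv n u) then wt (envStep ω) x n u *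
            ENNReal.ofReal (envStep ω (extv n u n) z) else 0) := by
    intro u
    rw [tsum_eq_single z (fun y hy => if_neg hy)]
    rw [if_pos rfl]
  refine (tsum_congr inner).trans ?_
  have split : ∀ u : Fin (n+1) → ℤ,
      (if C (extv n u) then wt (envStep ω) x n u *
          ENNReal.ofReal (envStep ω (extv n u n) z) else 0)
      = ({f : ℕ → ℤ | C f ∧ f n = z - 1}.indicator
            (fun _ => wt (envStep ω) x n u) (extv n u)) *
          ENNReal.ofReal (envStep ω (z-1) z)
        + ({f : ℕ → ℤ | C f ∧ f n = z + 1}.indicator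
            (fun _ => wt (envStep ω) x n u) (extv n u)) *
          ENNReal.ofReal (envStep ω (z+1) z) := by
    intro u
    by_cases hc : C (extv n u)
    · by_cases h1 : extv n u n = z - 1
      · rw [if_pos hc, Set.indicator_of_mem (by exact ⟨hc, h1⟩),
          Set.indicator_of_notMem (fun h => by have := h.2; omega), h1]
        simp
      · by_cases h2 : extv n u n = z + 1
        · rw [if_pos hc, Set.indicator_of_notMem (fun h => h1 h.2),
            Set.indicator_of_mem (by exact ⟨hc, h2⟩), h2]
          simp
        · have hz : envStep ω (extv n u n) z = 0 := by
            unfold envStep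
            rw [if_neg (by omega), if_neg (by omega)]
          rw [if_pos hc, Set.indicator_of_notMem (fun h => h1 h.2),
            Set.indicator_of_notMem (fun h => h2 h.2), hz]
          simp
    · rw [if_neg hc, Set.indicator_of_notMem (fun h => hc h.1),
        Set.indicator_of_notMem (fun h => hc h.1)]
      simp
  refine (tsum_congr split).trans ?_
  rw [ENNReal.tsum_add, ENNReal.tsum_mul_right, ENNReal.tsum_mul_right]

/-! ### step and environment facts -/

lemma envStep_up (ω : ℤ → ℝ) (z : ℤ) : envStep ω z (z+1) = ω z := by
  unfold envStep; rw [if_pos rfl]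

lemma envStep_down (ω : ℤ → ℝ) (z : ℤ) : envStep ω z (z-1) = 1 - ω z := by
  unfold envStep; rw [if_neg (by omega), if_pos rfl]

lemma envStep_up' (ω : ℤ → ℝ) (z : ℤ) : envStep ω (z-1) z = ω (z-1) := by
  have := envStep_up ω (z-1); rwa [sub_add_cancel] at this

lemma envStep_down' (ω : ℤ → ℝ) (z : ℤ) : envStep ω (z+1) z = 1 - ω (z+1) := by
  have := envStep_down ω (z+1); rwa [add_sub_cancel_right] at this

def om (m : ℕ) (p : ℝ) : ℤ → ℝ := fun z => if (m : ℤ) ∣ z then p else 1 / 2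

lemma om_nonneg (m : ℕ) {p : ℝ} (hp : 0 ≤ p) (z : ℤ) : 0 ≤ om m p z := by
  unfold om; split_ifs <;> linarith

lemma om_le_one (m : ℕ) {p : ℝ} (hp1 : p ≤ 1) (z : ℤ) : om m p z ≤ 1 := by
  unfold om; split_ifs <;> linarith

lemma envStep_om_nonneg {m : ℕ} {p : ℝ} (hp : 0 ≤ p) (hp1 : p ≤ 1) (z y : ℤ) :
    0 ≤ envStep (om m p) z y := by
  unfold envStep om; split_ifs <;> linarith

/-- inside the interval, divisibility by `m` means being `0` -/
lemma om_ins {m : ℕ} (hm : 1 ≤ m) {p : ℝ} {z : ℤ} (h1 : -(m:ℤ) < z) (h2 : z < m) :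
    om m p z = if z = 0 then p else 1/2 := by
  unfold om
  by_cases hz : z = 0
  · rw [if_pos hz, if_pos (by simp [hz])]
  · rw [if_neg hz, if_neg ?_]
    intro hdvd
    rcases hdvd with ⟨k, rfl⟩
    have hm0 : (0:ℤ) < m := by exact_mod_cast hm
    have hk1 : k < 1 := by by_contra hk; push_neg at hk; nlinarith
    have hk2 : -1 < k := by by_contra hk; push_neg at hk; nlinarith
    have hk0 : k = 0 := by omega
    rw [hk0, mul_zero] at hz
    exact hz rfl

/-! ### admissible trajectories and null sets -/

def Adm (n : ℕ) : Set (ℕ → ℤ) :=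
  {f | f 0 = 0 ∧ ∀ i < n, f (i+1) - f i = 1 ∨ f (i+1) - f i = -1}

lemma P_compl_Adm {P : Measure (ℕ → ℤ)} {ω : ℤ → ℝ}
    (hP : IsWalkLaw (envStep ω) 0 P) (n : ℕ) : P (Adm n)ᶜ = 0 := by
  have hdep : ∀ f g : ℕ → ℤ, (∀ i ≤ n, f i = g i) → f ∈ (Adm n)ᶜ → g ∈ (Adm n)ᶜ := by
    intro f g hfg hf hg
    refine hf ⟨(hfg 0 (by omega)).trans hg.1, fun i hi => ?_⟩
    rw [hfg (i+1) (by omega), hfg i (by omega)]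
    exact hg.2 i hi
  rw [master hP n _ hdep, ENNReal.tsum_eq_zero]
  intro v
  by_cases hv : extv n v ∈ (Adm n)ᶜ
  · rw [Set.indicator_of_mem hv]
    have hv' : ¬ (extv n v ∈ Adm n) := hv
    unfold wt
    by_cases h0 : extv n v 0 = 0
    · have hex : ∃ i, i < n ∧ ¬(extv n v (i+1) - extv n v i = 1 ∨
          extv n v (i+1) - extv n v i = -1) := by
        by_contra hno
        push_neg at hno
        exact hv' ⟨h0, fun i hi => hno i hi⟩
      obtain ⟨i, hi, hdiff⟩ := hex
      push_neg at hdiff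
      refine mul_eq_zero.2 (Or.inr ?_)
      refine Finset.prod_eq_zero (Finset.mem_range.2 hi) ?_
      have h0' : envStep ω (extv n v i) (extv n v (i+1)) = 0 := by
        unfold envStep; rw [if_neg (by omega), if_neg (by omega)]
      rw [h0', ENNReal.ofReal_zero]
    · rw [if_neg h0, zero_mul]
  · rw [Set.indicator_of_notMem hv]

lemma P_eq_of_inter_Adm {P : Measure (ℕ → ℤ)} {ω : ℤ → ℝ}
    (hP : IsWalkLaw (envStep ω) 0 P) (n : ℕ) {A B : Set (ℕ → ℤ)}
    (h : A ∩ Adm n = B ∩ Adm n) : P A = P B := by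
  have key : ∀ S : Set (ℕ → ℤ), P S = P (S ∩ Adm n) := by
    intro S
    refine le_antisymm ?_ (measure_mono Set.inter_subset_left)
    calc P S = P ((S ∩ Adm n) ∪ (S ∩ (Adm n)ᶜ)) := by rw [Set.inter_union_compl]
    _ ≤ P (S ∩ Adm n) + P (S ∩ (Adm n)ᶜ) := measure_union_le _ _
    _ ≤ P (S ∩ Adm n) + 0 := by
        gcongr
        exact le_of_le_of_eq (measure_mono Set.inter_subset_right) (P_compl_Adm hP n)
    _ = P (S ∩ Adm n) := add_zero _
  rw [key A, key B, h]

/-- crossing lemma: an admissible path avoiding `±m` up to time `n` stays inside -/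
lemma crossing {m : ℕ} (hm : 1 ≤ m) {n : ℕ} {f : ℕ → ℤ} (hf : f ∈ Adm n)
    (havoid : ∀ k ≤ n, f k ≠ (m:ℤ) ∧ f k ≠ -(m:ℤ)) :
    ∀ k ≤ n, -(m:ℤ) < f k ∧ f k < m := by
  intro k
  induction k with
  | zero =>
      intro _
      have h0 : f 0 = 0 := hf.1
      have : (0:ℤ) < m := by exact_mod_cast hm
      omega
  | succ k ih =>
      intro hk
      have hk' : k ≤ n := by omega
      have hb := ih hk'
      have hstep := hf.2 k (by omega)
      have havk := havoid (k+1) hk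
      omega

/-! ### hitting time characterizations -/

lemma hitTime_le_iff {f : ℕ → ℤ} {z : ℤ} {n : ℕ} :
    hitTime f z ≤ (n : ℕ∞) ↔ ∃ k ≤ n, f k = z := by
  constructor
  · intro h
    by_contra hno
    push_neg at hno
    have : (n:ℕ∞) + 1 ≤ hitTime f z := by
      refine le_iInf fun k => le_iInf fun hk => ?_
      have hkn : n + 1 ≤ k := by
        by_contra hlt
        exact hno k (by omega) hk
      exact_mod_cast Nat.cast_le.2 hkn
    have h2 : (n:ℕ∞) + 1 ≤ n := le_trans this h
    have h3 : (n:ℕ∞) < (n:ℕ∞) + 1 := by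
      have : ((n:ℕ):ℕ∞) < ((n+1:ℕ):ℕ∞) := by exact_mod_cast Nat.lt_succ_self n
      simpa using this
    exact absurd h2 (not_le.mpr h3)
  · rintro ⟨k, hk, hfk⟩
    refine le_trans (iInf_le_of_le k (iInf_le_of_le hfk (le_refl _))) ?_
    exact_mod_cast Nat.cast_le.2 hk

lemma lt_hitTime_iff {f : ℕ → ℤ} {z : ℤ} {n : ℕ} :
    (n : ℕ∞) < hitTime f z ↔ ∀ k ≤ n, f k ≠ z := by
  rw [lt_iff_not_ge]
  · constructor
    · intro h k hk hfk
      exact h (hitTime_le_iff.2 ⟨k, hk, hfk⟩)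
    · intro h hle
      obtain ⟨k, hk, hfk⟩ := hitTime_le_iff.1 hle
      exact h k hk hfk

lemma hitTime_eq_iff {f : ℕ → ℤ} {z : ℤ} {n : ℕ} :
    hitTime f z = (n : ℕ∞) ↔ f n = z ∧ ∀ k < n, f k ≠ z := by
  constructor
  · intro h
    have h1 : ∃ k ≤ n, f k = z := hitTime_le_iff.1 h.le
    have h2 : ∀ k < n, f k ≠ z := by
      intro k hk hfk
      have := hitTime_le_iff.2 ⟨k, le_refl k, hfk⟩
      rw [h] at this
      have : n ≤ k := by exact_mod_cast this
      omega
    obtain ⟨k, hk, hfk⟩ := h1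
    rcases Nat.lt_or_ge k n with hlt | hge
    · exact absurd hfk (h2 k hlt)
    · have : k = n := by omega
      exact ⟨this ▸ hfk, h2⟩
  · rintro ⟨h1, h2⟩
    refine le_antisymm (hitTime_le_iff.2 ⟨n, le_refl n, h1⟩) ?_
    refine le_iInf fun k => le_iInf fun hk => ?_
    have : n ≤ k := by
      by_contra hlt
      exact h2 k (by omega) hk
    exact_mod_cast Nat.cast_le.2 this

/-! ### the interior occupation densities -/

def Ins (m : ℕ) (z : ℤ) : Prop := -(m:ℤ) < z ∧ z < m

instance (m : ℕ) (z : ℤ) : Decidable (Ins m z) := by unfold Ins; infer_instance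

lemma ins_zero {m : ℕ} (hm : 1 ≤ m) : Ins m 0 := by
  have : (0:ℤ) < m := by exact_mod_cast hm
  exact ⟨by omega, by omega⟩

def qf (m : ℕ) (p : ℝ) : ℕ → ℤ → ℝ
  | 0, z => if z = 0 then 1 else 0
  | n+1, z => if Ins m z then
      qf m p n (z-1) * envStep (om m p) (z-1) z + qf m p n (z+1) * envStep (om m p) (z+1) z
    else 0

lemma qf_zero (m : ℕ) (p : ℝ) (z : ℤ) : qf m p 0 z = if z = 0 then 1 else 0 := rfl

lemma qf_succ (m : ℕ) (p : ℝ) (n : ℕ) (z : ℤ) : qf m p (n+1) z =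
    if Ins m z then
      qf m p n (z-1) * envStep (om m p) (z-1) z + qf m p n (z+1) * envStep (om m p) (z+1) z
    else 0 := rfl

lemma qf_nonneg {m : ℕ} {p : ℝ} (hp : 0 ≤ p) (hp1 : p ≤ 1) :
    ∀ (n : ℕ) (z : ℤ), 0 ≤ qf m p n z := by
  intro n
  induction n with
  | zero => intro z; rw [qf_zero]; split_ifs <;> norm_num
  | succ n ih =>
      intro z
      rw [qf_succ]
      split_ifs
      · have h1 := envStep_om_nonneg (m := m) hp hp1 (z-1) z
        have h2 := envStep_om_nonneg (m := m) hp hp1 (z+1) z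
        have h3 := ih (z-1)
        have h4 := ih (z+1)
        positivity
      · exact le_refl 0

lemma qf_not_ins {m : ℕ} (hm : 1 ≤ m) {p : ℝ} {z : ℤ} (h : ¬ Ins m z) :
    ∀ n, qf m p n z = 0 := by
  intro n
  cases n with
  | zero =>
      rw [qf_zero, if_neg (fun hz : z = 0 => h (hz ▸ ins_zero hm))]
  | succ n => rw [qf_succ, if_neg h]

/-- the exit events -/
def Ev (m : ℕ) (n : ℕ) (z : ℤ) : Set (ℕ → ℤ) := {f | (∀ k ≤ n, Ins m (f k)) ∧ f n = z}

lemma meas_Ev (m n : ℕ) (z : ℤ) : MeasurableSet (Ev m n z) := by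
  have : Ev m n z = (⋂ (k : ℕ) (_ : k ≤ n), {f : ℕ → ℤ | f k ∈ {y | Ins m y}})
      ∩ {f : ℕ → ℤ | f n ∈ ({z} : Set ℤ)} := by
    ext f; simp [Ev]
  rw [this]
  exact ((MeasurableSet.iInter fun k => MeasurableSet.iInter fun _ => mcoord k _).inter
    (mcoord n _))

lemma P_Ev {m : ℕ} (hm : 1 ≤ m) {p : ℝ} (hp : 0 ≤ p) (hp1 : p ≤ 1)
    {P : Measure (ℕ → ℤ)} (hP : IsWalkLaw (envStep (om m p)) 0 P) :
    ∀ (n : ℕ) (z : ℤ), P (Ev m n z) = ENNReal.ofReal (qf m p n z) := by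
  intro n
  induction n with
  | zero =>
      intro z
      by_cases hz : Ins m z
      · have hEv : Ev m 0 z = {f : ℕ → ℤ | ∀ i ≤ 0, f i = (fun _ => z) i} := by
          ext f
          constructor
          · rintro ⟨h1, h2⟩ i hi
            have : i = 0 := by omega
            rw [this]; exact h2
          · intro h
            refine ⟨fun k hk => ?_, h 0 (le_refl 0)⟩
            have : k = 0 := by omega
            rw [this, h 0 (le_refl 0)]; exact hz
        rw [hEv, hP.2 0 (fun _ => z)]
        simp only [Finset.range_zero, Finset.prod_empty, mul_one]
        rw [qf_zero]
        split_ifs <;> simp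
      · have hEv : Ev m 0 z = ∅ := by
          ext f
          simp only [Ev, Set.mem_setOf_eq, Set.mem_empty_iff_false, iff_false, not_and]
          intro h1 h2
          exact hz (h2 ▸ h1 0 (le_refl 0))
        rw [hEv, measure_empty, qf_not_ins hm hz 0, ENNReal.ofReal_zero]
  | succ n ih =>
      intro z
      by_cases hz : Ins m z
      · have hEv : Ev m (n+1) z =
            {f : ℕ → ℤ | (∀ k ≤ n, Ins m (f k)) ∧ f (n+1) = z} := by
          ext f
          constructor
          · rintro ⟨h1, h2⟩
            exact ⟨fun k hk => h1 k (by omega), h2⟩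
          · rintro ⟨h1, h2⟩
            refine ⟨fun k hk => ?_, h2⟩
            rcases Nat.lt_or_ge k (n+1) with hlt | hge
            · exact h1 k (by omega)
            · have : k = n + 1 := by omega
              rw [this, h2]; exact hz
        have hdep : ∀ f g : ℕ → ℤ, (∀ i ≤ n, f i = g i) →
            (∀ k ≤ n, Ins m (f k)) → (∀ k ≤ n, Ins m (g k)) := by
          intro f g hfg hf k hk
          rw [← hfg k hk]; exact hf k hk
        rw [hEv, peel hP n z _ hdep]
        have e1 : {f : ℕ → ℤ | (∀ k ≤ n, Ins m (f k)) ∧ f n = z - 1} = Ev m n (z-1) := rfl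
        have e2 : {f : ℕ → ℤ | (∀ k ≤ n, Ins m (f k)) ∧ f n = z + 1} = Ev m n (z+1) := rfl
        rw [e1, e2, ih (z-1), ih (z+1), qf_succ, if_pos hz]
        have n1 : 0 ≤ qf m p n (z-1) := qf_nonneg hp hp1 n (z-1)
        have n2 : 0 ≤ qf m p n (z+1) := qf_nonneg hp hp1 n (z+1)
        have s1 := envStep_om_nonneg (m := m) hp hp1 (z-1) z
        have s2 := envStep_om_nonneg (m := m) hp hp1 (z+1) z
        rw [ENNReal.ofReal_add (mul_nonneg n1 s1) (mul_nonneg n2 s2),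
          ENNReal.ofReal_mul n1, ENNReal.ofReal_mul n2]
      · have hEv : Ev m (n+1) z = ∅ := by
          ext f
          simp only [Ev, Set.mem_setOf_eq, Set.mem_empty_iff_false, iff_false, not_and]
          intro h1 h2
          exact hz (h2 ▸ h1 (n+1) (le_refl _))
        rw [hEv, measure_empty, qf_succ, if_neg hz, ENNReal.ofReal_zero]

/-! ### survival and absorption probabilities -/

def Ifin (m : ℕ) : Finset ℤ := Finset.Icc (1 - (m:ℤ)) ((m:ℤ) - 1)

def Sv (m n : ℕ) : Set (ℕ → ℤ) := {f | ∀ k ≤ n, Ins m (f k)}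

lemma meas_Sv (m n : ℕ) : MeasurableSet (Sv m n) := by
  have : Sv m n = ⋂ (k : ℕ) (_ : k ≤ n), {f : ℕ → ℤ | f k ∈ {y | Ins m y}} := by
    ext f; simp [Sv]
  rw [this]
  exact MeasurableSet.iInter fun k => MeasurableSet.iInter fun _ => mcoord k _

lemma P_Sv {m : ℕ} (hm : 1 ≤ m) {p : ℝ} (hp : 0 ≤ p) (hp1 : p ≤ 1)
    {P : Measure (ℕ → ℤ)} (hP : IsWalkLaw (envStep (om m p)) 0 P) (n : ℕ) :
    P (Sv m n) = ENNReal.ofReal (∑ z ∈ Ifin m, qf m p n z) := by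
  have hset : Sv m n = ⋃ z ∈ Ifin m, Ev m n z := by
    ext f
    constructor
    · intro hf
      have hn := hf n (le_refl n)
      refine Set.mem_biUnion (show f n ∈ Ifin m from Finset.mem_Icc.2 ?_)
        (⟨hf, rfl⟩ : f ∈ Ev m n (f n))
      obtain ⟨h1, h2⟩ := hn
      omega
    · intro hf
      obtain ⟨z, _, hfz⟩ := Set.mem_iUnion₂.1 hf
      exact hfz.1
  rw [hset, measure_biUnion_finset ?_ (fun z _ => meas_Ev m n z)]
  · rw [ENNReal.ofReal_sum_of_nonneg (fun z _ => qf_nonneg hp hp1 n z)]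
    exact Finset.sum_congr rfl fun z _ => P_Ev hm hp hp1 hP n z
  · intro y _ z _ hyz
    refine Set.disjoint_left.2 fun f hfy hfz => hyz ?_
    rw [← hfy.2, ← hfz.2]

/-- event of hitting `m` exactly at time `n`, avoiding `±m` before -/
def Dset (m n : ℕ) : Set (ℕ → ℤ) :=
  {f | f n = (m:ℤ) ∧ (∀ k < n, f k ≠ (m:ℤ)) ∧ (∀ k ≤ n, f k ≠ -(m:ℤ))}

lemma meas_Dset (m n : ℕ) : MeasurableSet (Dset m n) := by
  have : Dset m n = {f : ℕ → ℤ | f n ∈ ({(m:ℤ)} : Set ℤ)}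
      ∩ ((⋂ (k : ℕ) (_ : k < n), {f : ℕ → ℤ | f k ∈ {y | y ≠ (m:ℤ)}})
      ∩ (⋂ (k : ℕ) (_ : k ≤ n), {f : ℕ → ℤ | f k ∈ {y | y ≠ -(m:ℤ)}})) := by
    ext f; simp [Dset]
  rw [this]
  exact (mcoord n _).inter
    ((MeasurableSet.iInter fun k => MeasurableSet.iInter fun _ => mcoord k _).inter
     (MeasurableSet.iInter fun k => MeasurableSet.iInter fun _ => mcoord k _))

lemma P_Dset_zero {m : ℕ} (hm : 1 ≤ m) {p : ℝ}
    {P : Measure (ℕ → ℤ)} (hP : IsWalkLaw (envStep (om m p)) 0 P) :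
    P (Dset m 0) = 0 := by
  have hsub : Dset m 0 ⊆ {f : ℕ → ℤ | ∀ i ≤ 0, f i = (fun _ => (m:ℤ)) i} := by
    intro f hf i hi
    have : i = 0 := by omega
    rw [this]; exact hf.1
  refine le_antisymm ?_ zero_le
  refine le_trans (measure_mono hsub) ?_
  rw [hP.2 0 (fun _ => (m:ℤ))]
  have : ((m:ℤ) ≠ 0) := by
    have : (0:ℤ) < m := by exact_mod_cast hm
    omega
  rw [if_neg this, zero_mul]

lemma P_Dset_succ {m : ℕ} (hm : 1 ≤ m) {p : ℝ} (hp : 0 ≤ p) (hp1 : p ≤ 1)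
    {P : Measure (ℕ → ℤ)} (hP : IsWalkLaw (envStep (om m p)) 0 P) (n : ℕ) :
    P (Dset m (n+1)) = ENNReal.ofReal (qf m p n ((m:ℤ)-1) * om m p ((m:ℤ)-1)) := by
  have hm0 : (0:ℤ) < m := by exact_mod_cast hm
  have hstep1 : P (Dset m (n+1)) =
      P {f : ℕ → ℤ | (∀ k ≤ n, Ins m (f k)) ∧ f (n+1) = (m:ℤ)} := by
    refine P_eq_of_inter_Adm hP (n+1) ?_
    ext f
    simp only [Set.mem_inter_iff, Set.mem_setOf_eq, Dset]
    constructor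
    · rintro ⟨⟨h1, h2, h3⟩, hAdm⟩
      refine ⟨⟨?_, h1⟩, hAdm⟩
      have hAdm' : f ∈ Adm n := ⟨hAdm.1, fun i hi => hAdm.2 i (by omega)⟩
      exact crossing hm hAdm' (fun k hk => ⟨h2 k (by omega), h3 k (by omega)⟩)
    · rintro ⟨⟨h1, h2⟩, hAdm⟩
      refine ⟨⟨h2, fun k hk => ?_, fun k hk => ?_⟩, hAdm⟩
      · have := h1 k (by omega); obtain ⟨_, _⟩ := this; omega
      · rcases Nat.lt_or_ge k (n+1) with hlt | hge
        · have := h1 k (by omega); obtain ⟨_, _⟩ := this; omega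
        · have : k = n + 1 := by omega
          rw [this, h2]; omega
  have hdep : ∀ f g : ℕ → ℤ, (∀ i ≤ n, f i = g i) →
      (∀ k ≤ n, Ins m (f k)) → (∀ k ≤ n, Ins m (g k)) := by
    intro f g hfg hf k hk
    rw [← hfg k hk]; exact hf k hk
  rw [hstep1, peel hP n (m:ℤ) _ hdep]
  have e1 : {f : ℕ → ℤ | (∀ k ≤ n, Ins m (f k)) ∧ f n = (m:ℤ) - 1} = Ev m n ((m:ℤ)-1) := rfl
  have e2 : {f : ℕ → ℤ | (∀ k ≤ n, Ins m (f k)) ∧ f n = (m:ℤ) + 1} = Ev m n ((m:ℤ)+1) := rfl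
  rw [e1, e2, P_Ev hm hp hp1 hP n, P_Ev hm hp hp1 hP n,
    qf_not_ins hm (by unfold Ins; omega : ¬ Ins m ((m:ℤ)+1)) n]
  rw [ENNReal.ofReal_zero, zero_mul, add_zero, envStep_up',
    ← ENNReal.ofReal_mul (qf_nonneg hp hp1 n _)]

/-! ### harmonic functions -/

open Real in
def hfun (m : ℕ) (p : ℝ) (z : ℤ) : ℝ :=
  if z ≤ 0 then p * (1 + (z:ℝ) / m) else p + (z:ℝ) * (1 - p) / m

def gfun (m : ℕ) (z : ℤ) : ℝ := (m:ℝ)^2 - (z:ℝ)^2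

open Real in
def cfun (m : ℕ) (z : ℤ) : ℝ := Real.cos (π * z / (2*m))

open Real in
def theta (m : ℕ) : ℝ := Real.cos (π / (2*m))

section Harmonic

open Real

variable {m : ℕ} (hm : 1 ≤ m) {p : ℝ}

lemma mR_pos (hm : 1 ≤ m) : (0:ℝ) < m := by exact_mod_cast hm

lemma hfun_nonpos_val {z : ℤ} (hz : z ≤ 0) : hfun m p z = p * (1 + (z:ℝ) / m) :=
  if_pos hz

lemma hfun_nonneg_val {z : ℤ} (hz : 0 ≤ z) : hfun m p z = p + (z:ℝ) * (1 - p) / m := by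
  rcases eq_or_lt_of_le hz with h | h
  · rw [hfun, if_pos (by omega : z ≤ 0), ← h]
    norm_num
  · rw [hfun, if_neg (by omega)]

lemma hfun_zero : hfun m p 0 = p := by
  rw [hfun_nonpos_val (le_refl 0)]
  norm_num

lemma hfun_at (hm : 1 ≤ m) : hfun m p (m:ℤ) = 1 := by
  rw [hfun_nonneg_val (by exact_mod_cast Nat.zero_le m)]
  have h0 : (m:ℝ) ≠ 0 := (mR_pos hm).ne'
  push_cast
  field_simp
  ring

lemma hfun_at_neg (hm : 1 ≤ m) : hfun m p (-(m:ℤ)) = 0 := by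
  have hmne : (m:ℝ) ≠ 0 := (mR_pos hm).ne'
  rw [hfun_nonpos_val (by omega : -(m:ℤ) ≤ 0)]
  push_cast
  field_simp
  ring

lemma hfun_mem (hm : 1 ≤ m) (hp0 : 0 ≤ p) (hp1 : p ≤ 1) {z : ℤ}
    (h1 : -(m:ℤ) ≤ z) (h2 : z ≤ m) : 0 ≤ hfun m p z ∧ hfun m p z ≤ 1 := by
  have hm0 : (0:ℝ) < m := mR_pos hm
  rcases le_or_gt z 0 with hz | hz
  · rw [hfun_nonpos_val hz]
    have hz1 : (-1:ℝ) ≤ (z:ℝ) / m := by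
      rw [le_div_iff₀ hm0]
      have : (-(m:ℤ):ℝ) ≤ (z:ℝ) := by exact_mod_cast h1
      push_cast at this ⊢
      linarith
    have hz2 : (z:ℝ) / m ≤ 0 := by
      apply div_nonpos_of_nonpos_of_nonneg _ hm0.le
      exact_mod_cast hz
    constructor
    · nlinarith
    · nlinarith
  · rw [hfun_nonneg_val hz.le]
    have hzr : (0:ℝ) ≤ (z:ℝ) := by exact_mod_cast hz.le
    have hzm : (z:ℝ) ≤ (m:ℝ) := by exact_mod_cast h2
    constructor
    · have : 0 ≤ (z:ℝ) * (1-p) / m :=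
        div_nonneg (mul_nonneg hzr (by linarith)) hm0.le
      linarith
    · have h3 : (z:ℝ) * (1-p) ≤ (m:ℝ) * (1-p) := by nlinarith
      have h4 : (z:ℝ) * (1-p) / m ≤ (1-p) := by
        rw [div_le_iff₀ hm0]
        nlinarith
      linarith

lemma h_harm (hm : 1 ≤ m) {z : ℤ} (hz : Ins m z) :
    om m p z * hfun m p (z+1) + (1 - om m p z) * hfun m p (z-1) = hfun m p z := by
  have hm0 : (0:ℝ) < m := mR_pos hm
  have hmne : (m:ℝ) ≠ 0 := hm0.ne'
  rw [om_ins hm hz.1 hz.2]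
  by_cases hz0 : z = 0
  · rw [if_pos hz0, hz0]
    rw [hfun_nonneg_val (by omega : (0:ℤ) ≤ 0 + 1),
      hfun_nonpos_val (by omega : (0:ℤ) - 1 ≤ 0), hfun_zero]
    push_cast
    field_simp
    ring
  · rw [if_neg hz0]
    rcases lt_or_gt_of_ne (fun h : z = 0 => hz0 h) with hneg | hpos
    · rw [hfun_nonpos_val (by omega : z + 1 ≤ 0), hfun_nonpos_val (by omega : z - 1 ≤ 0),
        hfun_nonpos_val (by omega : z ≤ 0)]
      push_cast
      field_simp
      ring
    · rw [hfun_nonneg_val (by omega : (0:ℤ) ≤ z + 1), hfun_nonneg_val (by omega : (0:ℤ) ≤ z - 1),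
        hfun_nonneg_val (by omega : (0:ℤ) ≤ z)]
      push_cast
      field_simp
      ring

lemma gfun_at : gfun m (m:ℤ) = 0 := by unfold gfun; push_cast; ring

lemma gfun_at_neg : gfun m (-(m:ℤ)) = 0 := by unfold gfun; push_cast; ring

lemma gfun_zero : gfun m 0 = (m:ℝ)^2 := by unfold gfun; norm_num

lemma gfun_mem {z : ℤ} (h1 : -(m:ℤ) ≤ z) (h2 : z ≤ m) :
    0 ≤ gfun m z ∧ gfun m z ≤ (m:ℝ)^2 := by
  have hz1 : (-(m:ℝ)) ≤ (z:ℝ) := by exact_mod_cast h1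
  have hz2 : (z:ℝ) ≤ m := by exact_mod_cast h2
  unfold gfun
  constructor <;> nlinarith

lemma g_harm (hm : 1 ≤ m) {z : ℤ} (hz : Ins m z) :
    om m p z * gfun m (z+1) + (1 - om m p z) * gfun m (z-1) = gfun m z - 1 := by
  rw [om_ins hm hz.1 hz.2]
  unfold gfun
  by_cases hz0 : z = 0
  · rw [if_pos hz0, hz0]
    push_cast
    ring
  · rw [if_neg hz0]
    push_cast
    ring

lemma c_harm (hm : 1 ≤ m) {z : ℤ} (hz : Ins m z) :
    om m p z * cfun m (z+1) + (1 - om m p z) * cfun m (z-1) = theta m * cfun m z := by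
  have hmne : (m:ℝ) ≠ 0 := (mR_pos hm).ne'
  have e1 : π * ((z:ℝ)+1) / (2*m) = π * z/(2*m) + π/(2*m) := by field_simp
  have e2 : π * ((z:ℝ)-1) / (2*m) = π * z/(2*m) - π/(2*m) := by field_simp
  have c1 : cfun m (z+1)
      = cos (π*z/(2*m)) * cos (π/(2*m)) - sin (π*z/(2*m)) * sin (π/(2*m)) := by
    unfold cfun; push_cast; rw [e1, Real.cos_add]
  have c2 : cfun m (z-1)
      = cos (π*z/(2*m)) * cos (π/(2*m)) + sin (π*z/(2*m)) * sin (π/(2*m)) := by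
    unfold cfun; push_cast; rw [e2, Real.cos_sub]
  rw [om_ins hm hz.1 hz.2, c1, c2]
  unfold cfun theta
  by_cases hz0 : z = 0
  · rw [if_pos hz0, hz0]
    push_cast
    rw [show π * (0:ℝ) / (2*(m:ℝ)) = 0 by ring]
    rw [Real.sin_zero, Real.cos_zero]
    ring
  · rw [if_neg hz0]
    ring

lemma cfun_zero : cfun m 0 = 1 := by
  unfold cfun; push_cast
  rw [show π * (0:ℝ) / (2*(m:ℝ)) = 0 by ring, Real.cos_zero]

lemma cfun_at (hm : 1 ≤ m) : cfun m (m:ℤ) = 0 := by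
  have hmne : (m:ℝ) ≠ 0 := (mR_pos hm).ne'
  unfold cfun
  push_cast
  rw [show π * (m:ℝ) / (2*(m:ℝ)) = π / 2 by field_simp, Real.cos_pi_div_two]

lemma cfun_at_neg (hm : 1 ≤ m) : cfun m (-(m:ℤ)) = 0 := by
  have hmne : (m:ℝ) ≠ 0 := (mR_pos hm).ne'
  unfold cfun
  push_cast
  rw [show π * (-(m:ℝ)) / (2*(m:ℝ)) = -(π / 2) by field_simp, Real.cos_neg,
    Real.cos_pi_div_two]

lemma pi_div_le (hm : 1 ≤ m) : π/(2*(m:ℝ)) ≤ π/2 := by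
  have hm0 : (0:ℝ) < m := mR_pos hm
  rw [div_le_div_iff₀ (by positivity) (by norm_num)]
  have h1 : (1:ℝ) ≤ m := by exact_mod_cast hm
  nlinarith [Real.pi_pos]

lemma c0_pos (hm : 1 ≤ m) : 0 < sin (π/(2*m)) := by
  have hm0 : (0:ℝ) < m := mR_pos hm
  apply Real.sin_pos_of_pos_of_lt_pi
  · positivity
  · linarith [Real.pi_pos, pi_div_le hm]

lemma theta_nonneg (hm : 1 ≤ m) : 0 ≤ theta m := by
  have hm0 : (0:ℝ) < m := mR_pos hm
  apply Real.cos_nonneg_of_mem_Icc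
  constructor
  · have : (0:ℝ) ≤ π/(2*m) := by positivity
    linarith [Real.pi_pos]
  · exact pi_div_le hm

lemma theta_lt_one (hm : 1 ≤ m) : theta m < 1 := by
  have hm0 : (0:ℝ) < m := mR_pos hm
  have hx : (0:ℝ) < π/(2*m) := by positivity
  rcases lt_or_eq_of_le (Real.cos_le_one (π/(2*m))) with h | h
  · exact h
  · exfalso
    have hlt : π/(2*m) ≤ π/2 := pi_div_le hm
    have := (Real.cos_eq_one_iff_of_lt_of_lt (by linarith [Real.pi_pos]) (by linarith [Real.pi_pos])).1 h
    linarith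

lemma cfun_lb (hm : 1 ≤ m) {z : ℤ} (hz : Ins m z) : sin (π/(2*m)) ≤ cfun m z := by
  have hm0 : (0:ℝ) < m := mR_pos hm
  have hmne : (m:ℝ) ≠ 0 := hm0.ne'
  have hzb : |(z:ℝ)| ≤ (m:ℝ) - 1 := by
    have hz1 : (1 - (m:ℤ)) ≤ z := by obtain ⟨a, b⟩ := hz; omega
    have hz2 : z ≤ (m:ℤ) - 1 := by obtain ⟨a, b⟩ := hz; omega
    rw [abs_le]
    constructor
    · have : ((1 - (m:ℤ)):ℝ) ≤ (z:ℝ) := by exact_mod_cast hz1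
      push_cast at this
      linarith
    · have : ((z:ℝ)) ≤ (((m:ℤ) - 1):ℝ) := by exact_mod_cast hz2
      push_cast at this
      linarith
  have habs : |π * z / (2*m)| ≤ π/2 - π/(2*m) := by
    rw [abs_div, abs_mul, abs_of_pos Real.pi_pos, abs_of_pos (by positivity : (0:ℝ) < 2*m)]
    have h1 : π * |(z:ℝ)| ≤ π * ((m:ℝ) - 1) := by
      apply mul_le_mul_of_nonneg_left hzb Real.pi_pos.le
    have h2 : π * |(z:ℝ)| / (2*m) ≤ π * ((m:ℝ)-1) / (2*m) := by
      gcongr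
    have h3 : π * ((m:ℝ)-1) / (2*m) = π/2 - π/(2*m) := by field_simp
    linarith
  have hY : π/2 - π/(2*m) ≤ π := by
    have : (0:ℝ) ≤ π/(2*m) := by positivity
    linarith [Real.pi_pos]
  calc sin (π/(2*m)) = cos (π/2 - π/(2*m)) := (Real.cos_pi_div_two_sub _).symm
  _ ≤ cos (|π * z / (2*m)|) := Real.cos_le_cos_of_nonneg_of_le_pi (abs_nonneg _) hY habs
  _ = cfun m z := by rw [Real.cos_abs]; rfl

end Harmonic

/-! ### weighted sums over the interior -/

def Tsum (m : ℕ) (p : ℝ) (n : ℕ) (φ : ℤ → ℝ) : ℝ := ∑ z ∈ Ifin m, qf m p n z * φ z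

def Aseq (m : ℕ) (p : ℝ) (n : ℕ) : ℝ := ∑ z ∈ Ifin m, qf m p n z

def rseq (m : ℕ) (p : ℝ) (n : ℕ) : ℝ := qf m p n ((m:ℤ)-1) * om m p ((m:ℤ)-1)

section Tsums

open Real

variable {m : ℕ} {p : ℝ}

lemma zero_mem_Ifin (hm : 1 ≤ m) : (0:ℤ) ∈ Ifin m := by
  rw [Ifin, Finset.mem_Icc]; omega

lemma Tsum_zero (hm : 1 ≤ m) (φ : ℤ → ℝ) : Tsum m p 0 φ = φ 0 := by
  unfold Tsum
  rw [Finset.sum_eq_single 0 ?_ ?_]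
  · rw [qf_zero, if_pos rfl, one_mul]
  · intro b _ hb
    rw [qf_zero, if_neg hb, zero_mul]
  · intro h
    exact absurd (zero_mem_Ifin hm) h

lemma sum_shift_down (a b : ℤ) (G : ℤ → ℝ) :
    ∑ z ∈ Finset.Icc a b, G (z-1) = ∑ y ∈ Finset.Icc (a-1) (b-1), G y := by
  refine Finset.sum_nbij' (fun z => z - 1) (fun y => y + 1) ?_ ?_ ?_ ?_ ?_
  · intro x hx; simp only [Finset.mem_Icc] at *; omega
  · intro x hx; simp only [Finset.mem_Icc] at *; omega
  · intro x _; omega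
  · intro x _; omega
  · intro x _; rfl

lemma sum_shift_up (a b : ℤ) (H : ℤ → ℝ) :
    ∑ z ∈ Finset.Icc a b, H (z+1) = ∑ y ∈ Finset.Icc (a+1) (b+1), H y := by
  refine Finset.sum_nbij' (fun z => z + 1) (fun y => y - 1) ?_ ?_ ?_ ?_ ?_
  · intro x hx; simp only [Finset.mem_Icc] at *; omega
  · intro x hx; simp only [Finset.mem_Icc] at *; omega
  · intro x _; omega
  · intro x _; omega
  · intro x _; rfl

lemma Tsum_succ (hm : 1 ≤ m) (n : ℕ) (φ : ℤ → ℝ) :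
    Tsum m p (n+1) φ
      = Tsum m p n (fun z => om m p z * φ (z+1) + (1 - om m p z) * φ (z-1))
        - qf m p n ((m:ℤ)-1) * om m p ((m:ℤ)-1) * φ (m:ℤ)
        - qf m p n (1-(m:ℤ)) * (1 - om m p (1-(m:ℤ))) * φ (-(m:ℤ)) := by
  classical
  set G : ℤ → ℝ := fun y => qf m p n y * om m p y * φ (y+1) with hGdef
  set H : ℤ → ℝ := fun y => qf m p n y * (1 - om m p y) * φ (y-1) with hHdef
  have hGapp : ∀ y, G y = qf m p n y * om m p y * φ (y+1) := fun y => rfl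
  have hHapp : ∀ y, H y = qf m p n y * (1 - om m p y) * φ (y-1) := fun y => rfl
  have hterm : ∀ z ∈ Ifin m, qf m p (n+1) z * φ z = G (z-1) + H (z+1) := by
    intro z hz
    rw [Ifin, Finset.mem_Icc] at hz
    have hIns : Ins m z := ⟨by omega, by omega⟩
    rw [qf_succ, if_pos hIns, envStep_up', envStep_down',
      hGapp, hHapp, sub_add_cancel, add_sub_cancel_right]
    ring
  have hsum1 : Tsum m p (n+1) φ = (∑ z ∈ Ifin m, G (z-1)) + (∑ z ∈ Ifin m, H (z+1)) := by
    unfold Tsum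
    rw [Finset.sum_congr rfl hterm, Finset.sum_add_distrib]
  have e1 : ∑ y ∈ Finset.Icc (1-(m:ℤ)-1) ((m:ℤ)-1-1), G y
      = ∑ y ∈ Finset.Icc (1-(m:ℤ)) ((m:ℤ)-2), G y := by
    have hIcc : Finset.Icc (1-(m:ℤ)-1) ((m:ℤ)-1-1)
        = insert (-(m:ℤ)) (Finset.Icc (1-(m:ℤ)) ((m:ℤ)-2)) := by
      ext w
      simp only [Finset.mem_Icc, Finset.mem_insert]
      omega
    rw [hIcc, Finset.sum_insert (by rw [Finset.mem_Icc]; omega),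
      hGapp, qf_not_ins hm (by unfold Ins; omega) n, zero_mul, zero_mul, zero_add]
  have e2 : ∑ z ∈ Ifin m, G z = (∑ y ∈ Finset.Icc (1-(m:ℤ)) ((m:ℤ)-2), G y) + G ((m:ℤ)-1) := by
    have hIcc : Ifin m = insert ((m:ℤ)-1) (Finset.Icc (1-(m:ℤ)) ((m:ℤ)-2)) := by
      rw [Ifin]
      ext w
      simp only [Finset.mem_Icc, Finset.mem_insert]
      omega
    rw [hIcc, Finset.sum_insert (by rw [Finset.mem_Icc]; omega), add_comm]
  have e3 : ∑ y ∈ Finset.Icc (1-(m:ℤ)+1) ((m:ℤ)-1+1), H y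
      = ∑ y ∈ Finset.Icc (2-(m:ℤ)) ((m:ℤ)-1), H y := by
    have hIcc : Finset.Icc (1-(m:ℤ)+1) ((m:ℤ)-1+1)
        = insert (m:ℤ) (Finset.Icc (2-(m:ℤ)) ((m:ℤ)-1)) := by
      ext w
      simp only [Finset.mem_Icc, Finset.mem_insert]
      omega
    rw [hIcc, Finset.sum_insert (by rw [Finset.mem_Icc]; omega),
      hHapp, qf_not_ins hm (by unfold Ins; omega) n, zero_mul, zero_mul, zero_add]
  have e4 : ∑ z ∈ Ifin m, H z = H (1-(m:ℤ)) + ∑ y ∈ Finset.Icc (2-(m:ℤ)) ((m:ℤ)-1), H y := by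
    have hIcc : Ifin m = insert (1-(m:ℤ)) (Finset.Icc (2-(m:ℤ)) ((m:ℤ)-1)) := by
      rw [Ifin]
      ext w
      simp only [Finset.mem_Icc, Finset.mem_insert]
      omega
    rw [hIcc, Finset.sum_insert (by rw [Finset.mem_Icc]; omega)]
  have hpsi : Tsum m p n (fun z => om m p z * φ (z+1) + (1 - om m p z) * φ (z-1))
      = (∑ z ∈ Ifin m, G z) + (∑ z ∈ Ifin m, H z) := by
    unfold Tsum
    rw [← Finset.sum_add_distrib]
    refine Finset.sum_congr rfl fun z _ => ?_
    rw [hGapp, hHapp]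
    ring
  have hGm : G ((m:ℤ)-1) = qf m p n ((m:ℤ)-1) * om m p ((m:ℤ)-1) * φ (m:ℤ) := by
    rw [hGapp, sub_add_cancel]
  have hHm : H (1-(m:ℤ)) = qf m p n (1-(m:ℤ)) * (1 - om m p (1-(m:ℤ))) * φ (-(m:ℤ)) := by
    rw [hHapp, show (1-(m:ℤ))-1 = -(m:ℤ) by ring]
  rw [hsum1, Ifin, sum_shift_down, sum_shift_up, e1, e3, hpsi]
  rw [← hGm, ← hHm]
  linarith [e2, e4]

lemma Tsum_h_succ (hm : 1 ≤ m) (n : ℕ) :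
    Tsum m p (n+1) (hfun m p) = Tsum m p n (hfun m p) - rseq m p n := by
  rw [Tsum_succ hm n, hfun_at hm, hfun_at_neg hm, mul_one, mul_zero, sub_zero]
  have : Tsum m p n (fun z => om m p z * hfun m p (z+1) + (1 - om m p z) * hfun m p (z-1))
      = Tsum m p n (hfun m p) := by
    unfold Tsum
    refine Finset.sum_congr rfl fun z hz => ?_
    rw [Ifin, Finset.mem_Icc] at hz
    dsimp only
    rw [h_harm hm (⟨by omega, by omega⟩ : Ins m z)]
  rw [this, rseq]

lemma Tsum_g_succ (hm : 1 ≤ m) (n : ℕ) :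
    Tsum m p (n+1) (gfun m) = Tsum m p n (gfun m) - Aseq m p n := by
  rw [Tsum_succ hm n, gfun_at, gfun_at_neg, mul_zero, mul_zero, sub_zero, sub_zero]
  have : Tsum m p n (fun z => om m p z * gfun m (z+1) + (1 - om m p z) * gfun m (z-1))
      = Tsum m p n (fun z => gfun m z - 1) := by
    unfold Tsum
    refine Finset.sum_congr rfl fun z hz => ?_
    rw [Ifin, Finset.mem_Icc] at hz
    dsimp only
    rw [g_harm hm (⟨by omega, by omega⟩ : Ins m z)]
  rw [this]
  unfold Tsum Aseq
  rw [← Finset.sum_sub_distrib]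
  refine Finset.sum_congr rfl fun z _ => ?_
  ring

lemma Tsum_c_succ (hm : 1 ≤ m) (n : ℕ) :
    Tsum m p (n+1) (cfun m) = theta m * Tsum m p n (cfun m) := by
  rw [Tsum_succ hm n, cfun_at hm, cfun_at_neg hm, mul_zero, mul_zero, sub_zero, sub_zero]
  have : Tsum m p n (fun z => om m p z * cfun m (z+1) + (1 - om m p z) * cfun m (z-1))
      = Tsum m p n (fun z => theta m * cfun m z) := by
    unfold Tsum
    refine Finset.sum_congr rfl fun z hz => ?_
    rw [Ifin, Finset.mem_Icc] at hz
    dsimp only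
    rw [c_harm hm (⟨by omega, by omega⟩ : Ins m z)]
  rw [this]
  unfold Tsum
  rw [Finset.mul_sum]
  refine Finset.sum_congr rfl fun z _ => ?_
  ring

lemma Tsum_c_eq (hm : 1 ≤ m) (n : ℕ) : Tsum m p n (cfun m) = theta m ^ n := by
  induction n with
  | zero => rw [Tsum_zero hm, cfun_zero, pow_zero]
  | succ n ih => rw [Tsum_c_succ hm n, ih, pow_succ]; ring

lemma Aseq_nonneg (hp : 0 ≤ p) (hp1 : p ≤ 1) (n : ℕ) : 0 ≤ Aseq m p n :=
  Finset.sum_nonneg fun z _ => qf_nonneg hp hp1 n z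

lemma rseq_nonneg (hp : 0 ≤ p) (hp1 : p ≤ 1) (n : ℕ) : 0 ≤ rseq m p n :=
  mul_nonneg (qf_nonneg hp hp1 n _) (om_nonneg m hp _)

lemma Aseq_le (hm : 1 ≤ m) (hp : 0 ≤ p) (hp1 : p ≤ 1) (n : ℕ) :
    Aseq m p n ≤ theta m ^ n / Real.sin (π/(2*m)) := by
  have hc0 := c0_pos hm
  rw [le_div_iff₀ hc0]
  calc Aseq m p n * Real.sin (π/(2*m)) = ∑ z ∈ Ifin m, qf m p n z * Real.sin (π/(2*m)) := by
        rw [Aseq, Finset.sum_mul]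
  _ ≤ ∑ z ∈ Ifin m, qf m p n z * cfun m z := by
        refine Finset.sum_le_sum fun z hz => ?_
        rw [Ifin, Finset.mem_Icc] at hz
        exact mul_le_mul_of_nonneg_left (cfun_lb hm (⟨by omega, by omega⟩ : Ins m z))
          (qf_nonneg hp hp1 n z)
  _ = theta m ^ n := Tsum_c_eq hm n

lemma Tsum_h_nonneg (hm : 1 ≤ m) (hp : 0 ≤ p) (hp1 : p ≤ 1) (n : ℕ) :
    0 ≤ Tsum m p n (hfun m p) :=
  Finset.sum_nonneg fun z hz => by
    rw [Ifin, Finset.mem_Icc] at hz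
    exact mul_nonneg (qf_nonneg hp hp1 n z)
      (hfun_mem hm hp hp1 (by omega) (by omega)).1

lemma Tsum_h_le (hm : 1 ≤ m) (hp : 0 ≤ p) (hp1 : p ≤ 1) (n : ℕ) :
    Tsum m p n (hfun m p) ≤ Aseq m p n := by
  unfold Tsum Aseq
  refine Finset.sum_le_sum fun z hz => ?_
  rw [Ifin, Finset.mem_Icc] at hz
  calc qf m p n z * hfun m p z ≤ qf m p n z * 1 :=
        mul_le_mul_of_nonneg_left (hfun_mem hm hp hp1 (by omega) (by omega)).2
          (qf_nonneg hp hp1 n z)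
  _ = qf m p n z := mul_one _

lemma Tsum_g_nonneg (hm : 1 ≤ m) (hp : 0 ≤ p) (hp1 : p ≤ 1) (n : ℕ) :
    0 ≤ Tsum m p n (gfun m) :=
  Finset.sum_nonneg fun z hz => by
    rw [Ifin, Finset.mem_Icc] at hz
    exact mul_nonneg (qf_nonneg hp hp1 n z) (gfun_mem (by omega) (by omega)).1

lemma Tsum_g_le (hm : 1 ≤ m) (hp : 0 ≤ p) (hp1 : p ≤ 1) (n : ℕ) :
    Tsum m p n (gfun m) ≤ (m:ℝ)^2 * Aseq m p n := by
  unfold Tsum Aseq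
  rw [Finset.mul_sum]
  refine Finset.sum_le_sum fun z hz => ?_
  rw [Ifin, Finset.mem_Icc] at hz
  calc qf m p n z * gfun m z ≤ qf m p n z * (m:ℝ)^2 :=
        mul_le_mul_of_nonneg_left (gfun_mem (by omega) (by omega)).2 (qf_nonneg hp hp1 n z)
  _ = (m:ℝ)^2 * qf m p n z := by ring

lemma sum_rseq (hm : 1 ≤ m) (N : ℕ) :
    ∑ k ∈ Finset.range N, rseq m p k = p - Tsum m p N (hfun m p) := by
  induction N with
  | zero =>
      rw [Finset.range_zero, Finset.sum_empty, Tsum_zero hm, hfun_zero]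
      ring
  | succ N ih =>
      rw [Finset.sum_range_succ, ih, Tsum_h_succ hm N]
      ring

lemma sum_Aseq (hm : 1 ≤ m) (N : ℕ) :
    ∑ k ∈ Finset.range N, Aseq m p k = (m:ℝ)^2 - Tsum m p N (gfun m) := by
  induction N with
  | zero =>
      rw [Finset.range_zero, Finset.sum_empty, Tsum_zero hm, gfun_zero]
      ring
  | succ N ih =>
      rw [Finset.sum_range_succ, ih, Tsum_g_succ hm N]
      ring

lemma Aseq_tendsto (hm : 1 ≤ m) (hp : 0 ≤ p) (hp1 : p ≤ 1) :
    Filter.Tendsto (Aseq m p) Filter.atTop (nhds 0) := by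
  have hc0 := c0_pos hm
  refine squeeze_zero (Aseq_nonneg hp hp1) (Aseq_le hm hp hp1) ?_
  have hθ := tendsto_pow_atTop_nhds_zero_of_lt_one (theta_nonneg hm) (theta_lt_one hm)
  have := hθ.div_const (Real.sin (π/(2*m)))
  simpa using this

lemma tsum_rseq (hm : 1 ≤ m) (hp : 0 ≤ p) (hp1 : p ≤ 1) :
    HasSum (rseq m p) p := by
  have htend : Filter.Tendsto (fun N => ∑ k ∈ Finset.range N, rseq m p k)
      Filter.atTop (nhds p) := by
    have h1 : Filter.Tendsto (fun N => Tsum m p N (hfun m p)) Filter.atTop (nhds 0) :=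
      squeeze_zero (Tsum_h_nonneg hm hp hp1) (Tsum_h_le hm hp hp1) (Aseq_tendsto hm hp hp1)
    have h2 := (tendsto_const_nhds (x := p) (f := Filter.atTop (α := ℕ))).sub h1
    rw [sub_zero] at h2
    refine h2.congr fun N => ?_
    rw [sum_rseq hm N]
  have hsummable : Summable (rseq m p) := by
    refine summable_of_sum_range_le (c := p) (rseq_nonneg hp hp1) fun N => ?_
    rw [sum_rseq hm N]
    linarith [Tsum_h_nonneg hm hp hp1 N]
  have := hsummable.hasSum
  rwa [tendsto_nhds_unique hsummable.hasSum.tendsto_sum_nat htend] at this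

lemma tsum_Aseq (hm : 1 ≤ m) (hp : 0 ≤ p) (hp1 : p ≤ 1) :
    HasSum (Aseq m p) ((m:ℝ)^2) := by
  have htend : Filter.Tendsto (fun N => ∑ k ∈ Finset.range N, Aseq m p k)
      Filter.atTop (nhds ((m:ℝ)^2)) := by
    have h1 : Filter.Tendsto (fun N => Tsum m p N (gfun m)) Filter.atTop (nhds 0) := by
      refine squeeze_zero (Tsum_g_nonneg hm hp hp1) (Tsum_g_le hm hp hp1) ?_
      have := (Aseq_tendsto hm hp hp1).const_mul ((m:ℝ)^2)
      simpa using this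
    have h2 := (tendsto_const_nhds (x := (m:ℝ)^2) (f := Filter.atTop (α := ℕ))).sub h1
    rw [sub_zero] at h2
    refine h2.congr fun N => ?_
    rw [sum_Aseq hm N]
  have hsummable : Summable (Aseq m p) := by
    refine summable_of_sum_range_le (c := (m:ℝ)^2) (Aseq_nonneg hp hp1) fun N => ?_
    rw [sum_Aseq hm N]
    linarith [Tsum_g_nonneg hm hp hp1 N]
  have := hsummable.hasSum
  rwa [tendsto_nhds_unique hsummable.hasSum.tendsto_sum_nat htend] at this

end Tsums

/-! ### assembling the events -/

section Assembly

variable {m : ℕ} {p : ℝ} {P : Measure (ℕ → ℤ)}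

lemma tau_set_eq (n : ℕ) :
    {f : ℕ → ℤ | (n:ℕ∞) < min (hitTime f (m:ℤ)) (hitTime f (-(m:ℤ)))}
      = {f : ℕ → ℤ | ∀ k ≤ n, f k ≠ (m:ℤ) ∧ f k ≠ -(m:ℤ)} := by
  ext f
  simp only [Set.mem_setOf_eq, lt_min_iff, lt_hitTime_iff]
  constructor
  · rintro ⟨h1, h2⟩ k hk
    exact ⟨h1 k hk, h2 k hk⟩
  · intro h
    exact ⟨fun k hk => (h k hk).1, fun k hk => (h k hk).2⟩

lemma meas_tau_set (n : ℕ) :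
    MeasurableSet {f : ℕ → ℤ | (n:ℕ∞) < min (hitTime f (m:ℤ)) (hitTime f (-(m:ℤ)))} := by
  rw [tau_set_eq]
  have : {f : ℕ → ℤ | ∀ k ≤ n, f k ≠ (m:ℤ) ∧ f k ≠ -(m:ℤ)}
      = ⋂ (k : ℕ) (_ : k ≤ n), {f : ℕ → ℤ | f k ∈ {y : ℤ | y ≠ (m:ℤ) ∧ y ≠ -(m:ℤ)}} := by
    ext f; simp
  rw [this]
  exact MeasurableSet.iInter fun k => MeasurableSet.iInter fun _ => mcoord k _

lemma P_tau_gt (hm : 1 ≤ m) (hp : 0 ≤ p) (hp1 : p ≤ 1)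
    (hP : IsWalkLaw (envStep (om m p)) 0 P) (n : ℕ) :
    P {f : ℕ → ℤ | (n:ℕ∞) < min (hitTime f (m:ℤ)) (hitTime f (-(m:ℤ)))}
      = ENNReal.ofReal (Aseq m p n) := by
  rw [tau_set_eq]
  have hcongr : {f : ℕ → ℤ | ∀ k ≤ n, f k ≠ (m:ℤ) ∧ f k ≠ -(m:ℤ)} ∩ Adm n
      = Sv m n ∩ Adm n := by
    ext f
    simp only [Set.mem_inter_iff, Set.mem_setOf_eq]
    constructor
    · rintro ⟨h1, h2⟩
      exact ⟨crossing hm h2 h1, h2⟩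
    · rintro ⟨h1, h2⟩
      refine ⟨fun k hk => ?_, h2⟩
      obtain ⟨a, b⟩ := h1 k hk
      constructor <;> omega
  rw [P_eq_of_inter_Adm hP n hcongr, P_Sv hm hp hp1 hP n]
  rfl

lemma hit_set_eq :
    {f : ℕ → ℤ | hitTime f (m:ℤ) < hitTime f (-(m:ℤ))} = ⋃ n : ℕ, Dset m n := by
  ext f
  simp only [Set.mem_setOf_eq, Set.mem_iUnion]
  constructor
  · intro hlt
    have hne : hitTime f (m:ℤ) ≠ ⊤ := by
      intro h
      rw [h] at hlt
      exact not_top_lt hlt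
    obtain ⟨n, hn⟩ := WithTop.ne_top_iff_exists.1 hne
    refine ⟨n, ?_⟩
    have h1 := hitTime_eq_iff.1 hn.symm
    have h2 : (n:ℕ∞) < hitTime f (-(m:ℤ)) := by rw [← hn] at hlt; exact hlt
    have h3 := lt_hitTime_iff.1 h2
    exact ⟨h1.1, h1.2, h3⟩
  · rintro ⟨n, h1, h2, h3⟩
    have ha : hitTime f (m:ℤ) = (n:ℕ∞) := hitTime_eq_iff.2 ⟨h1, h2⟩
    have hb : (n:ℕ∞) < hitTime f (-(m:ℤ)) := lt_hitTime_iff.2 h3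
    rw [ha]
    exact hb

lemma P_hit (hm : 1 ≤ m) (hp : 0 ≤ p) (hp1 : p ≤ 1)
    (hP : IsWalkLaw (envStep (om m p)) 0 P) :
    P {f : ℕ → ℤ | hitTime f (m:ℤ) < hitTime f (-(m:ℤ))} = ENNReal.ofReal p := by
  rw [hit_set_eq]
  rw [measure_iUnion ?_ (fun n => meas_Dset m n)]
  · rw [tsum_eq_zero_add' ENNReal.summable, P_Dset_zero hm hP, zero_add]
    have : ∀ n : ℕ, P (Dset m (n+1)) = ENNReal.ofReal (rseq m p n) := fun n =>
      P_Dset_succ hm hp hp1 hP n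
    rw [tsum_congr this, ← ENNReal.ofReal_tsum_of_nonneg (rseq_nonneg hp hp1)
      (tsum_rseq hm hp hp1).summable, (tsum_rseq hm hp hp1).tsum_eq]
  · intro i j hij
    refine Set.disjoint_left.2 fun f hfi hfj => hij ?_
    have h1 : hitTime f (m:ℤ) = (i:ℕ∞) := hitTime_eq_iff.2 ⟨hfi.1, hfi.2.1⟩
    have h2 : hitTime f (m:ℤ) = (j:ℕ∞) := hitTime_eq_iff.2 ⟨hfj.1, hfj.2.1⟩
    rw [h1] at h2
    exact_mod_cast h2

/-! ### the expected exit time -/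

lemma enat_coe_tsum (a : ℕ∞) :
    (a : ℝ≥0∞) = ∑' n : ℕ, (if (n:ℕ∞) < a then (1:ℝ≥0∞) else 0) := by
  induction a using ENat.recTopCoe with
  | top =>
      rw [ENat.toENNReal_top]
      have : ∀ n : ℕ, (if (n:ℕ∞) < ⊤ then (1:ℝ≥0∞) else 0) = 1 := fun n =>
        if_pos (WithTop.coe_lt_top n)
      rw [tsum_congr this]
      exact (ENNReal.tsum_const_eq_top_of_ne_zero one_ne_zero).symm
  | coe k =>
      rw [ENat.toENNReal_coe]
      rw [tsum_eq_sum (s := Finset.range k) (fun n hn => if_neg ?_)]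
      · rw [Finset.sum_congr rfl (fun n hn => if_pos ?_)]
        · simp
        · rw [Finset.mem_range] at hn
          exact_mod_cast hn
      · rw [Finset.mem_range] at hn
        intro hlt
        have : n < k := by exact_mod_cast hlt
        omega

lemma lintegral_tau (hm : 1 ≤ m) (hp : 0 ≤ p) (hp1 : p ≤ 1)
    (hP : IsWalkLaw (envStep (om m p)) 0 P) :
    ∫⁻ f, ((min (hitTime f (m:ℤ)) (hitTime f (-(m:ℤ))) : ℕ∞) : ℝ≥0∞) ∂P
      = ∑' n : ℕ, ENNReal.ofReal (Aseq m p n) := by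
  have hpt : ∀ f : ℕ → ℤ,
      ((min (hitTime f (m:ℤ)) (hitTime f (-(m:ℤ))) : ℕ∞) : ℝ≥0∞)
      = ∑' n : ℕ, Set.indicator
          {g : ℕ → ℤ | (n:ℕ∞) < min (hitTime g (m:ℤ)) (hitTime g (-(m:ℤ)))}
          (fun _ => (1:ℝ≥0∞)) f := by
    intro f
    rw [enat_coe_tsum]
    refine tsum_congr fun n => ?_
    rw [Set.indicator_apply]
    rfl
  rw [lintegral_congr hpt, lintegral_tsum (fun n =>
    (measurable_const.indicator (meas_tau_set (m := m) n)).aemeasurable)]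
  refine tsum_congr fun n => ?_
  refine Eq.trans ?_ (P_tau_gt hm hp hp1 hP n)
  exact lintegral_indicator_one (meas_tau_set (m := m) n)

lemma tsum_ofReal_Aseq (hm : 1 ≤ m) (hp : 0 ≤ p) (hp1 : p ≤ 1) :
    ∑' n : ℕ, ENNReal.ofReal (Aseq m p n) = ((m : ℝ≥0∞)) ^ 2 := by
  rw [← ENNReal.ofReal_tsum_of_nonneg (Aseq_nonneg hp hp1) (tsum_Aseq hm hp hp1).summable,
    (tsum_Aseq hm hp hp1).tsum_eq]
  rw [ENNReal.ofReal_pow (by positivity)]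
  congr 1
  exact ENNReal.ofReal_natCast m

end Assembly

end XPf

/-- For the environment with drifts `(p,1−p)` at the multiples of `m` and fair coins
elsewhere, the walk started at `0` hits `m` before `−m` with probability `p`, and the
expected exit time of `(−m,m)` is `m²`. -/
theorem exit_probability_and_time_equally_spaced
    (m : ℕ) (hm : 1 ≤ m) (p : ℝ) (hp : 1 / 2 < p) (hp1 : p ≤ 1)
    (P : Measure (ℕ → ℤ))
    (hP : IsWalkLaw (envStep (fun z : ℤ => if (m : ℤ) ∣ z then p else 1 / 2)) 0 P) :
    P {f | hitTime f (m : ℤ) < hitTime f (-(m : ℤ))} = ENNReal.ofReal p ∧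
      ∫⁻ f, ((min (hitTime f (m : ℤ)) (hitTime f (-(m : ℤ))) : ℕ∞) : ℝ≥0∞) ∂P =
        ((m : ℝ≥0∞)) ^ 2 := by
  have hp0 : (0:ℝ) ≤ p := by linarith
  have hP' : IsWalkLaw (envStep (XPf.om m p)) 0 P := hP
  constructor
  · exact XPf.P_hit hm hp0 hp1 hP'
  · rw [XPf.lintegral_tau hm hp0 hp1 hP']
    exact XPf.tsum_ofReal_Aseq hm hp0 hp1
end
end
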